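/- arXiv:2406.20049 — 5 statements merged into one kernel-verified Lean document; each statement's English description precedes it below -/
import Mathlib

section
/- For words A, B of length ℓ with equal auto-correlations (Cor(A,A) = Cor(B,B)), the map φ on overlap words, defined on a decomposition Y = C_1 ^{m_1} C_2 ^{m_2} ⋯ ^{m_{k−1}} C_k (each C_i ∈ {A,B}, m_i ∈ Cor(C_i, C_{i+1})) by φ(Y) = C̄_k ^{m_{k−1}} C̄_{k−1} ⋯ ^{m_1} C̄_1 (where Ā = B, B̄ = A), produces a well-defined word of the same length as Y. -/
/-- Number of (possibly overlapping) occurrences of `A` as a contiguous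
substring of `X`, counted via start positions. -/
def countOcc (A X : List Bool) : ℕ :=
  ((Finset.range (X.length + 1)).filter
    (fun i => i + A.length ≤ X.length ∧ (X.drop i).take A.length = A)).card

/-- Correlation set `Cor(A,B)`: those `1 ≤ k ≤ ℓ-1` such that the length-`k`
suffix of `A` equals the length-`k` prefix of `B`. -/
def corSet (A B : List Bool) : Finset ℕ :=
  (Finset.Icc 1 (A.length - 1)).filter (fun k => A.drop (A.length - k) = B.take k)

/-- Correlation number `[A,B] = Σ_{k ∈ Cor(A,B)} 2^k`. -/
def corNum (A B : List Bool) : ℕ := ∑ k ∈ corSet A B, 2 ^ k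

/-- The swap: `bar A B A = B`, `bar A B B = A` (when `C ∈ {A,B}`). -/
def bar (A B C : List Bool) : List Bool := if C = A then B else A

/-- The word `C₁ ^{m₁} C₂ ^{m₂} ⋯ ^{m_{k-1}} C_k`. -/
def chainWord : List (List Bool) → List ℕ → List Bool
  | [], _ => []
  | [C], _ => C
  | C :: C' :: Cs, m :: ms => C ++ (chainWord (C' :: Cs) ms).drop m
  | C :: _ :: _, [] => C

/-- Validity of the chain data: each `mᵢ ∈ Cor(Cᵢ, Cᵢ₊₁)`. -/
def chainValid (Cs : List (List Bool)) (ms : List ℕ) : Prop :=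
  ∀ i, i < ms.length → ms.getD i 0 ∈ corSet (Cs.getD i []) (Cs.getD (i + 1) [])

/-- `Y` is an overlap of `A` and `B`, i.e. `Y = C₁ ^{m₁} ⋯ ^{m_{k-1}} C_k`
with all `Cᵢ ∈ {A,B}` and `mᵢ ∈ Cor(Cᵢ,Cᵢ₊₁)`. -/
def isOverlap (A B Y : List Bool) : Prop :=
  ∃ Cs ms, Cs ≠ [] ∧ Cs.length = ms.length + 1 ∧ (∀ C ∈ Cs, C = A ∨ C = B) ∧
    chainValid Cs ms ∧ Y = chainWord Cs ms

/-- `Y'` is obtained from the overlap `Y = C₁ ^{m₁} ⋯ ^{m_{k-1}} C_k` by the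
swap map: `Y' = C̄_k ^{m_{k-1}} ⋯ ^{m₁} C̄₁` (for some decomposition of `Y`). -/
def overlapFlip (A B Y Y' : List Bool) : Prop :=
  ∃ Cs ms, Cs ≠ [] ∧ Cs.length = ms.length + 1 ∧ (∀ C ∈ Cs, C = A ∨ C = B) ∧
    chainValid Cs ms ∧ Y = chainWord Cs ms ∧
    Y' = chainWord ((Cs.map (bar A B)).reverse) ms.reverse

/-- `interleave [X₀,…,X_k] [E₁,…,E_k] = X₀ E₁ X₁ ⋯ E_k X_k`. -/
def interleave : List (List Bool) → List (List Bool) → List Bool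
  | [], _ => []
  | X :: _, [] => X
  | X :: Xs, E :: Es => X ++ E ++ interleave Xs Es

/-- `Y = X₀ E₁ X₁ ⋯ E_k X_k` is a decomposition of `Y` with respect to `(A,B)`:
the `Eᵢ` are overlaps of `A` and `B` capturing all occurrences of `A` and `B`
in `Y`, and the gaps `Xᵢ` contain no occurrence of `A` or `B`. -/
def isDecomp (A B Y : List Bool) (Xs Es : List (List Bool)) : Prop :=
  Xs.length = Es.length + 1 ∧ Y = interleave Xs Es ∧
  (∀ E ∈ Es, isOverlap A B E) ∧
  (∀ X ∈ Xs, countOcc A X = 0 ∧ countOcc B X = 0) ∧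
  countOcc A Y = (Es.map (countOcc A)).sum ∧
  countOcc B Y = (Es.map (countOcc B)).sum

/-- `L^M(I)`: the number of words `Y` with pattern `M = (E₁,…,E_k)` and gap
lengths `I = (i₀,…,i_k)`. -/
noncomputable def patCount (A B : List Bool) (M : List (List Bool)) (I : List ℕ) : ℕ :=
  {Y : List Bool | ∃ Xs, isDecomp A B Y Xs M ∧ Xs.map List.length = I}.ncard

/-- `M'` is the image of the pattern `M = (E₁,…,E_k)` under
`φ(E₁,…,E_k) = (φ(E_k),…,φ(E₁))`. -/
def patternFlip (A B : List Bool) (M M' : List (List Bool)) : Prop :=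
  M'.length = M.length ∧
  ∀ j, j < M.length → overlapFlip A B (M.reverse.getD j []) (M'.getD j [])


section Aux

lemma mem_corSet_bounds {C C' : List Bool} {m : ℕ} (h : m ∈ corSet C C') :
    1 ≤ m ∧ m < C.length := by
  simp only [corSet, Finset.mem_filter, Finset.mem_Icc] at h
  omega

lemma corSet_flip (A B : List Bool) (hcor : corSet A A = corSet B B)
    (C C' : List Bool) (hC : C = A ∨ C = B) (hC' : C' = A ∨ C' = B) :
    corSet C C' = corSet (bar A B C') (bar A B C) := by
  rcases hC with rfl | rfl <;> rcases hC' with rfl | rfl <;>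
    unfold bar <;> split_ifs <;> simp_all

lemma chainWord_len (ℓ : ℕ) : ∀ ms Cs, Cs.length = ms.length + 1 →
    (∀ C ∈ Cs, C.length = ℓ) → (∀ m ∈ ms, m < ℓ) →
    ℓ ≤ (chainWord Cs ms).length ∧ (chainWord Cs ms).length + ms.sum = Cs.length * ℓ := by
  intro ms
  induction ms with
  | nil =>
    intro Cs h hC _
    match Cs, h with
    | [C], _ =>
      have := hC C (by simp)
      simp [chainWord, this]
  | cons m ms ih =>
    intro Cs h hC hm
    match Cs, h with
    | C :: C' :: Cs', h =>
      have hlen' : (C' :: Cs').length = ms.length + 1 := by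
        simpa using h
      obtain ⟨h1, h2⟩ := ih (C' :: Cs') hlen'
        (fun x hx => hC x (List.mem_cons_of_mem _ hx))
        (fun x hx => hm x (List.mem_cons_of_mem _ hx))
      have hCl : C.length = ℓ := hC C (by simp)
      have hmℓ : m < ℓ := hm m (by simp)
      simp only [chainWord, List.length_append, List.length_drop, List.sum_cons,
        List.length_cons] at *
      constructor
      · omega
      · have : (Cs'.length + 1 + 1) * ℓ = (Cs'.length + 1) * ℓ + ℓ := by ring
        omega

end Aux

/-- if `Cor(A,A) = Cor(B,B)`, then for any valid chain
`Y = C₁ ^{m₁} ⋯ ^{m_{k-1}} C_k` with `Cᵢ ∈ {A,B}`, the flipped chain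
`C̄_k ^{m_{k-1}} ⋯ ^{m₁} C̄₁` is a valid chain and produces a word of the same
length as `Y`. -/
theorem flip_chain_well_defined (ℓ : ℕ) (A B : List Bool)
    (hA : A.length = ℓ) (hB : B.length = ℓ) (hcor : corSet A A = corSet B B)
    (Cs : List (List Bool)) (ms : List ℕ)
    (hlen : Cs.length = ms.length + 1) (hmem : ∀ C ∈ Cs, C = A ∨ C = B)
    (hvalid : chainValid Cs ms) :
    chainValid ((Cs.map (bar A B)).reverse) ms.reverse ∧
    (chainWord ((Cs.map (bar A B)).reverse) ms.reverse).length = (chainWord Cs ms).length := by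
  have hlenℓ : ∀ C ∈ Cs, C.length = ℓ := fun C hC =>
    (hmem C hC).elim (fun h => h ▸ hA) (fun h => h ▸ hB)
  have hms_lt : ∀ m ∈ ms, m < ℓ := by
    intro m hm
    obtain ⟨i, hi, rfl⟩ := List.getElem_of_mem hm
    have hv := hvalid i hi
    rw [List.getD_eq_getElem ms 0 hi] at hv
    have hiC : i < Cs.length := by omega
    have hmemC : Cs.getD i [] ∈ Cs := by
      rw [List.getD_eq_getElem Cs [] hiC]; exact List.getElem_mem hiC
    have := mem_corSet_bounds hv
    have := hlenℓ _ hmemC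
    omega
  have hval' : chainValid ((Cs.map (bar A B)).reverse) ms.reverse := by
    intro i hi
    rw [List.length_reverse] at hi
    have hj : ms.length - 1 - i < ms.length := by omega
    have hi1 : i < ms.reverse.length := by rw [List.length_reverse]; exact hi
    have hiC : i < ((Cs.map (bar A B)).reverse).length := by
      simp [hlen]; omega
    have hiC1 : i + 1 < ((Cs.map (bar A B)).reverse).length := by
      simp [hlen]; omega
    rw [List.getD_eq_getElem _ 0 hi1, List.getD_eq_getElem _ [] hiC,
      List.getD_eq_getElem _ [] hiC1, List.getElem_reverse, List.getElem_reverse,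
      List.getElem_reverse]
    simp only [List.length_map, hlen, List.getElem_map]
    have e1 : ms.length + 1 - 1 - i = (ms.length - 1 - i) + 1 := by omega
    have e2 : ms.length + 1 - 1 - (i + 1) = ms.length - 1 - i := by omega
    simp only [e1, e2]
    set j := ms.length - 1 - i with hjdef
    have hv := hvalid j hj
    have hjC : j < Cs.length := by omega
    have hjC1 : j + 1 < Cs.length := by omega
    rw [List.getD_eq_getElem ms 0 hj, List.getD_eq_getElem Cs [] hjC,
      List.getD_eq_getElem Cs [] hjC1] at hv
    rw [← corSet_flip A B hcor _ _ (hmem _ (List.getElem_mem hjC))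
      (hmem _ (List.getElem_mem hjC1))]
    exact hv
  refine ⟨hval', ?_⟩
  obtain ⟨g1, g2⟩ := chainWord_len ℓ ms Cs hlen hlenℓ hms_lt
  have hlen2 : ∀ C ∈ (Cs.map (bar A B)).reverse, C.length = ℓ := by
    intro C hC
    simp only [List.mem_reverse, List.mem_map] at hC
    obtain ⟨D, hD, rfl⟩ := hC
    unfold bar
    split <;> [exact hB; exact hA]
  have hms2 : ∀ m ∈ ms.reverse, m < ℓ := by
    intro m hm
    rw [List.mem_reverse] at hm
    exact hms_lt m hm
  obtain ⟨g1', g2'⟩ := chainWord_len ℓ ms.reverse ((Cs.map (bar A B)).reverse)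
    (by simp [hlen]) hlen2 hms2
  rw [List.sum_reverse] at g2'
  rw [List.length_reverse, List.length_map] at g2'
  omega
end

section
/- Main theorem (fairness of generalized Litt's game): let A and B be words of length ℓ over {H,T} with Cor(A,A) = Cor(B,B). Then for every n ≥ 1 and every pair (a,b) of natural numbers, the number of words X of length n with (N_A(X), N_B(X)) = (a,b) equals the number of words X of length n with (N_A(X), N_B(X)) = (b,a). Equivalently, under the uniform distribution on {H,T}^n, (N_A(X_n), N_B(X_n)) and (N_B(X_n), N_A(X_n)) have the same distribution. -/
def occAt (W X : List Bool) (p : ℕ) : Prop :=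
  p + W.length ≤ X.length ∧ ∀ t, t < W.length → X.getD (p+t) false = W.getD t false

def occs (W X : List Bool) : Finset ℕ :=
  (Finset.range (X.length + 1)).filter
    (fun i => i + W.length ≤ X.length ∧ (X.drop i).take W.length = W)

lemma countOcc_eq (W X : List Bool) : countOcc W X = (occs W X).card := rfl

lemma take_drop_eq_iff {X W : List Bool} {p : ℕ} (h : p + W.length ≤ X.length) :
    (X.drop p).take W.length = W ↔ ∀ t, t < W.length → X.getD (p+t) false = W.getD t false := by
  constructor
  · intro h2 t ht
    have := congrArg (fun l => l.getD t false) h2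
    simpa [List.getD_eq_getElem?_getD, List.getElem?_take, List.getElem?_drop, ht] using this
  · intro h2
    apply List.ext_getElem
    · simp only [List.length_take, List.length_drop]; omega
    · intro i h1 h2'
      have hi : i < W.length := h2'
      have h3 := h2 i hi
      rw [List.getD_eq_getElem (hn := by omega), List.getD_eq_getElem (hn := hi)] at h3
      simpa [List.getElem_take, List.getElem_drop] using h3

lemma mem_occs {W X : List Bool} {p : ℕ} : p ∈ occs W X ↔ occAt W X p := by
  rw [occs, occAt, Finset.mem_filter, Finset.mem_range]
  constructor
  · rintro ⟨-, h1, h2⟩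
    exact ⟨h1, (take_drop_eq_iff h1).1 h2⟩
  · rintro ⟨h1, h2⟩
    exact ⟨by omega, h1, (take_drop_eq_iff h1).2 h2⟩

lemma occs_subset_range {W X : List Bool} : occs W X ⊆ Finset.range (X.length + 1) :=
  Finset.filter_subset _ _

lemma countOcc_le {W X : List Bool} : countOcc W X ≤ X.length + 1 := by
  rw [countOcc_eq]
  calc (occs W X).card ≤ (Finset.range (X.length+1)).card :=
        Finset.card_le_card occs_subset_range
    _ = X.length + 1 := Finset.card_range _

def lab (A B : List Bool) (sA : Finset ℕ) (p : ℕ) : List Bool := if p ∈ sA then A else B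

def covS (ℓ : ℕ) (s : Finset ℕ) (i : ℕ) : Finset ℕ := s.filter (fun p => p ≤ i ∧ i < p + ℓ)

def fval (A B : List Bool) (sA sB : Finset ℕ) (i : ℕ) : Bool :=
  if h : (covS A.length (sA ∪ sB) i).Nonempty then
    (lab A B sA ((covS A.length (sA ∪ sB) i).max' h)).getD
      (i - (covS A.length (sA ∪ sB) i).max' h) false
  else false

def fmin (s : Finset ℕ) : ℕ := if h : s.Nonempty then s.min' h else 0
def fmax (s : Finset ℕ) : ℕ := if h : s.Nonempty then s.max' h else 0
def reflP (s : Finset ℕ) (p : ℕ) : ℕ := fmin s + fmax s - p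

def rho (ℓ : ℕ) (s : Finset ℕ) (i : ℕ) : ℕ :=
  if s.Nonempty ∧ fmin s ≤ i ∧ i < fmax s + ℓ then fmin s + fmax s + ℓ - 1 - i else i

def flipWord (A B : List Bool) (sA sB : Finset ℕ) (X : List Bool) : List Bool :=
  List.ofFn (fun i : Fin X.length =>
    if (covS A.length (sB.image (reflP (sA ∪ sB)) ∪ sA.image (reflP (sA ∪ sB))) ↑i).Nonempty
    then fval A B (sB.image (reflP (sA ∪ sB))) (sA.image (reflP (sA ∪ sB))) ↑i
    else X.getD (rho A.length (sA ∪ sB) ↑i) false)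

/- ### basic reflP facts -/

lemma fmin_le_mem {s : Finset ℕ} {p : ℕ} (hp : p ∈ s) : fmin s ≤ p := by
  rw [fmin, dif_pos ⟨p, hp⟩]; exact Finset.min'_le _ _ hp

lemma mem_le_fmax {s : Finset ℕ} {p : ℕ} (hp : p ∈ s) : p ≤ fmax s := by
  rw [fmax, dif_pos ⟨p, hp⟩]; exact Finset.le_max' _ _ hp

lemma fmin_mem {s : Finset ℕ} (h : s.Nonempty) : fmin s ∈ s := by
  rw [fmin, dif_pos h]; exact Finset.min'_mem _ _

lemma fmax_mem {s : Finset ℕ} (h : s.Nonempty) : fmax s ∈ s := by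
  rw [fmax, dif_pos h]; exact Finset.max'_mem _ _

lemma reflP_reflP {s : Finset ℕ} {p : ℕ} (hp : p ∈ s) : reflP s (reflP s p) = p := by
  have h1 := fmin_le_mem hp; have h2 := mem_le_fmax hp
  unfold reflP; omega

lemma reflP_bounds {s : Finset ℕ} {p : ℕ} (hp : p ∈ s) :
    fmin s ≤ reflP s p ∧ reflP s p ≤ fmax s := by
  have h1 := fmin_le_mem hp; have h2 := mem_le_fmax hp
  have h3 := fmin_le_mem (fmin_mem ⟨p, hp⟩)
  unfold reflP; constructor <;> omega

lemma reflP_injOn {s t : Finset ℕ} (hts : t ⊆ s) : Set.InjOn (reflP s) ↑t := by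
  intro x hx y hy hxy
  have h1 := mem_le_fmax (hts hx); have h2 := mem_le_fmax (hts hy)
  unfold reflP at hxy; omega

lemma mem_image_reflP {s t : Finset ℕ} (hts : t ⊆ s) {p : ℕ} (hp : p ∈ s) :
    reflP s p ∈ t.image (reflP s) ↔ p ∈ t := by
  constructor
  · intro h
    obtain ⟨y, hy, hye⟩ := Finset.mem_image.1 h
    have h1 := mem_le_fmax (hts hy); have h2 := mem_le_fmax hp
    have : y = p := by unfold reflP at hye; omega
    exact this ▸ hy
  · intro h; exact Finset.mem_image_of_mem _ h

lemma fmin_image {s : Finset ℕ} (h : s.Nonempty) : fmin (s.image (reflP s)) = fmin s := by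
  have hne : (s.image (reflP s)).Nonempty := h.image _
  apply le_antisymm
  · have : fmin s ∈ s.image (reflP s) := by
      have := fmax_mem h
      have he : reflP s (fmax s) = fmin s := by
        have := fmin_le_mem (fmax_mem h); unfold reflP; omega
      exact he ▸ Finset.mem_image_of_mem _ (fmax_mem h)
    exact fmin_le_mem this
  · have e : fmin (s.image (reflP s)) = (s.image (reflP s)).min' hne := dif_pos hne
    rw [e]
    apply Finset.le_min'
    intro y hy
    obtain ⟨x, hx, hxe⟩ := Finset.mem_image.1 hy
    exact hxe ▸ (reflP_bounds hx).1

lemma fmax_image {s : Finset ℕ} (h : s.Nonempty) : fmax (s.image (reflP s)) = fmax s := by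
  have hne : (s.image (reflP s)).Nonempty := h.image _
  apply le_antisymm
  · have e : fmax (s.image (reflP s)) = (s.image (reflP s)).max' hne := dif_pos hne
    rw [e]
    apply Finset.max'_le
    intro y hy
    obtain ⟨x, hx, hxe⟩ := Finset.mem_image.1 hy
    exact hxe ▸ (reflP_bounds hx).2
  · have he : reflP s (fmin s) = fmax s := by
      have := fmin_le_mem (fmax_mem h); have := mem_le_fmax (fmin_mem h); unfold reflP; omega
    exact mem_le_fmax (he ▸ Finset.mem_image_of_mem _ (fmin_mem h))

lemma reflP_image (s : Finset ℕ) : reflP (s.image (reflP s)) = reflP s := by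
  rcases s.eq_empty_or_nonempty with h | h
  · subst h; simp
  · funext p; simp only [reflP]; rw [fmin_image h, fmax_image h]

lemma rho_image (ℓ : ℕ) (s : Finset ℕ) : rho ℓ (s.image (reflP s)) = rho ℓ s := by
  rcases s.eq_empty_or_nonempty with h | h
  · subst h; simp
  · funext i; simp only [rho]
    rw [fmin_image h, fmax_image h]
    congr 1
    simp [Finset.image_nonempty, h]

lemma marks_invol {s t : Finset ℕ} (hts : t ⊆ s) :
    (t.image (reflP s)).image (reflP (s.image (reflP s))) = t := by
  rw [reflP_image, Finset.image_image]
  calc t.image (reflP s ∘ reflP s) = t.image id :=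
        Finset.image_congr (fun x hx => reflP_reflP (hts hx))
    _ = t := Finset.image_id
/- ### the Good context -/

structure Good (A B X : List Bool) (sA sB : Finset ℕ) : Prop where
  hBA : B.length = A.length
  hAB : A ≠ B
  hcor : corSet A A = corSet B B
  hsA : ∀ p ∈ sA, occAt A X p
  hsB : ∀ p ∈ sB, occAt B X p

namespace Good

variable {A B X : List Bool} {sA sB : Finset ℕ}

lemma hl (h : Good A B X sA sB) : 1 ≤ A.length := by
  by_contra hc
  have hA : A = [] := List.length_eq_zero_iff.1 (by omega)
  have hB : B = [] := List.length_eq_zero_iff.1 (by rw [h.hBA]; omega)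
  exact h.hAB (hA.trans hB.symm)

lemma hdisj (h : Good A B X sA sB) {p : ℕ} (h1 : p ∈ sA) (h2 : p ∈ sB) : False := by
  have o1 := h.hsA p h1
  have o2 := h.hsB p h2
  apply h.hAB
  apply List.ext_getElem h.hBA.symm
  intro i hA hB'
  have e1 := o1.2 i hA
  have e2 := o2.2 i (by omega)
  rw [List.getD_eq_getElem (hn := hA)] at e1
  rw [List.getD_eq_getElem (hn := hB')] at e2
  rw [← e1, ← e2]

lemma lab_len (h : Good A B X sA sB) (s₀ : Finset ℕ) (p : ℕ) : (lab A B s₀ p).length = A.length := by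
  unfold lab; split <;> simp [h.hBA]

lemma lab_mem (h : Good A B X sA sB) (p : ℕ) : lab A B sA p = A ∨ lab A B sA p = B := by
  unfold lab; split
  · exact Or.inl rfl
  · exact Or.inr rfl

lemma lab_occ (h : Good A B X sA sB) {p : ℕ} (hp : p ∈ sA ∪ sB) : occAt (lab A B sA p) X p := by
  unfold lab; split
  · exact h.hsA p ‹_›
  · rcases Finset.mem_union.1 hp with h' | h'
    · exact absurd h' ‹_›
    · exact h.hsB p h'

lemma mem_len (h : Good A B X sA sB) {p : ℕ} (hp : p ∈ sA ∪ sB) : p + A.length ≤ X.length := by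
  have := (h.lab_occ hp).1
  rwa [h.lab_len sA] at this

/-- pointwise agreement of overlapping labelled occurrences -/
lemma agree (h : Good A B X sA sB) {p q i : ℕ} (hp : p ∈ sA ∪ sB) (hq : q ∈ sA ∪ sB)
    (hpi : p ≤ i) (hqi : q ≤ i) (hip : i < p + A.length) (hiq : i < q + A.length) :
    (lab A B sA p).getD (i - p) false = (lab A B sA q).getD (i - q) false := by
  have o1 := h.lab_occ hp
  have o2 := h.lab_occ hq
  have l1 := h.lab_len sA p
  have l2 := h.lab_len sA q
  have e1 := o1.2 (i - p) (by omega)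
  have e2 := o2.2 (i - q) (by omega)
  rw [show p + (i - p) = i by omega] at e1
  rw [show q + (i - q) = i by omega] at e2
  rw [← e1, ← e2]

/-- overlap of two occurrences gives a correlation -/
lemma cor_mem (h : Good A B X sA sB) {p q : ℕ} (hp : p ∈ sA ∪ sB) (hq : q ∈ sA ∪ sB)
    (hlt : p < q) (hov : q < p + A.length) :
    (p + A.length - q) ∈ corSet (lab A B sA p) (lab A B sA q) := by
  set ℓ := A.length with hℓ
  set k := p + ℓ - q with hk
  have l1 := h.lab_len sA p
  have l2 := h.lab_len sA q
  rw [corSet, Finset.mem_filter, Finset.mem_Icc]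
  refine ⟨⟨by omega, by omega⟩, ?_⟩
  apply List.ext_getElem
  · simp only [List.length_drop, List.length_take]; omega
  · intro j h1 h2
    have hj : j < k := by simp only [List.length_drop] at h1; omega
    rw [List.getElem_drop, List.getElem_take,
        ← List.getD_eq_getElem (lab A B sA p) false (hn := by omega),
        ← List.getD_eq_getElem (lab A B sA q) false (hn := by omega)]
    have := h.agree hp hq (i := q + j) (by omega) (by omega) (by omega) (by omega)
    rw [show q + j - p = (lab A B sA p).length - k + j by omega] at this
    rw [show q + j - q = j by omega] at this
    exact this

end Good

/-- correlation transfer under the bar swap -/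
lemma cor_bar {A B C D : List Bool} (hAB : A ≠ B) (hcor : corSet A A = corSet B B)
    (hC : C = A ∨ C = B) (hD : D = A ∨ D = B) {k : ℕ} (hk : k ∈ corSet C D) :
    k ∈ corSet (bar A B D) (bar A B C) := by
  have eA : bar A B A = B := if_pos rfl
  have eB : bar A B B = A := if_neg (fun e => hAB e.symm)
  rcases hC with rfl | rfl <;> rcases hD with rfl | rfl
  · rw [eA, ← hcor]; exact hk
  · rw [eB, eA]; exact hk
  · rw [eA, eB]; exact hk
  · rw [eB, hcor]; exact hk

/-- pointwise consequence of a correlation -/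
lemma cor_pointwise {A C D : List Bool} (hC : C.length = A.length) (hD : D.length = A.length)
    {p q : ℕ} (hlt : p < q) (hov : q < p + A.length)
    (hk : (p + A.length - q) ∈ corSet C D) :
    ∀ i, q ≤ i → i < p + A.length → C.getD (i - p) false = D.getD (i - q) false := by
  intro i hqi hip
  set ℓ := A.length
  set k := p + ℓ - q with hkk
  have h2 : C.drop (C.length - k) = D.take k := (Finset.mem_filter.1 hk).2
  have e0 := congrArg (fun l => l[i - q]?) h2
  simp only [List.getElem?_drop, List.getElem?_take] at e0
  rw [if_pos (by omega)] at e0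
  rw [show C.length - k + (i - q) = i - p by omega] at e0
  rw [List.getD_eq_getElem?_getD, List.getD_eq_getElem?_getD, e0]
lemma bar_len {A B : List Bool} (hBA : B.length = A.length) (C : List Bool) :
    (bar A B C).length = A.length := by
  unfold bar; split
  · exact hBA
  · rfl

lemma s'_eq {sA sB : Finset ℕ} :
    sB.image (reflP (sA ∪ sB)) ∪ sA.image (reflP (sA ∪ sB))
      = (sA ∪ sB).image (reflP (sA ∪ sB)) := by
  rw [← Finset.image_union, Finset.union_comm]

lemma flipWord_length {A B X : List Bool} {sA sB : Finset ℕ} :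
    (flipWord A B sA sB X).length = X.length := List.length_ofFn

lemma flipWord_getD {A B X : List Bool} {sA sB : Finset ℕ} {i : ℕ} (hi : i < X.length) :
    (flipWord A B sA sB X).getD i false =
      if (covS A.length (sB.image (reflP (sA ∪ sB)) ∪ sA.image (reflP (sA ∪ sB))) i).Nonempty
      then fval A B (sB.image (reflP (sA ∪ sB))) (sA.image (reflP (sA ∪ sB))) i
      else X.getD (rho A.length (sA ∪ sB) i) false := by
  rw [flipWord, List.getD_eq_getElem _ _ (hn := by simpa [List.length_ofFn] using hi),
    List.getElem_ofFn]

lemma fval_spec {A B : List Bool} {sA sB : Finset ℕ}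
    (hcomp : ∀ p ∈ sA ∪ sB, ∀ q ∈ sA ∪ sB, p ≤ q → ∀ i, q ≤ i → i < p + A.length →
      (lab A B sA p).getD (i - p) false = (lab A B sA q).getD (i - q) false)
    {p t : ℕ} (hp : p ∈ sA ∪ sB) (ht : t < A.length) :
    fval A B sA sB (p + t) = (lab A B sA p).getD t false := by
  have hpc : p ∈ covS A.length (sA ∪ sB) (p + t) :=
    Finset.mem_filter.2 ⟨hp, by omega, by omega⟩
  have hne : (covS A.length (sA ∪ sB) (p+t)).Nonempty := ⟨p, hpc⟩
  rw [fval, dif_pos hne]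
  have hqf := Finset.mem_filter.1 (Finset.max'_mem _ hne)
  have hpq : p ≤ (covS A.length (sA ∪ sB) (p+t)).max' hne := Finset.le_max' _ _ hpc
  have h2 := hcomp p hp _ hqf.1 hpq (p+t) hqf.2.1 (by omega)
  rw [show p + t - p = t by omega] at h2
  exact h2.symm

namespace Good

variable {A B X : List Bool} {sA sB : Finset ℕ}

lemma fval_eq_word (h : Good A B X sA sB) {i : ℕ}
    (hne : (covS A.length (sA ∪ sB) i).Nonempty) :
    fval A B sA sB i = X.getD i false := by
  rw [fval, dif_pos hne]
  have hqf := Finset.mem_filter.1 (Finset.max'_mem _ hne)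
  have h2 := (h.lab_occ hqf.1).2 (i - (covS A.length (sA ∪ sB) i).max' hne)
    (by rw [h.lab_len sA]; omega)
  rw [show (covS A.length (sA ∪ sB) i).max' hne + (i - (covS A.length (sA ∪ sB) i).max' hne)
      = i by have := hqf.2.1; omega] at h2
  exact h2.symm

lemma lab_bar (h : Good A B X sA sB) {x : ℕ} (hx : x ∈ sA ∪ sB) :
    lab A B (sB.image (reflP (sA ∪ sB))) (reflP (sA ∪ sB) x) = bar A B (lab A B sA x) := by
  by_cases hxA : x ∈ sA
  · have hxB : x ∉ sB := fun hb => h.hdisj hxA hb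
    have hm : reflP (sA ∪ sB) x ∉ sB.image (reflP (sA ∪ sB)) := by
      rw [mem_image_reflP Finset.subset_union_right hx]; exact hxB
    rw [lab, if_neg hm, lab, if_pos hxA, bar, if_pos rfl]
  · have hxB : x ∈ sB := by
      rcases Finset.mem_union.1 hx with h' | h'
      · exact absurd h' hxA
      · exact h'
    have hm : reflP (sA ∪ sB) x ∈ sB.image (reflP (sA ∪ sB)) :=
      Finset.mem_image_of_mem _ hxB
    rw [lab, if_pos hm, lab, if_neg hxA, bar, if_neg (fun e => h.hAB e.symm)]

lemma agree' (h : Good A B X sA sB) {p' q' i : ℕ}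
    (hp' : p' ∈ sB.image (reflP (sA ∪ sB)) ∪ sA.image (reflP (sA ∪ sB)))
    (hq' : q' ∈ sB.image (reflP (sA ∪ sB)) ∪ sA.image (reflP (sA ∪ sB)))
    (hle : p' ≤ q') (hqi : q' ≤ i) (hip : i < p' + A.length) :
    (lab A B (sB.image (reflP (sA ∪ sB))) p').getD (i - p') false
      = (lab A B (sB.image (reflP (sA ∪ sB))) q').getD (i - q') false := by
  rcases eq_or_lt_of_le hle with rfl | hlt
  · rfl
  rw [s'_eq] at hp' hq'
  obtain ⟨u, hu, hue⟩ := Finset.mem_image.1 hp'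
  obtain ⟨v, hv, hve⟩ := Finset.mem_image.1 hq'
  have hu1 := fmin_le_mem hu; have hu2 := mem_le_fmax hu
  have hv1 := fmin_le_mem hv; have hv2 := mem_le_fmax hv
  simp only [reflP] at hue hve
  have hvu : v < u := by omega
  have hov : u < v + A.length := by omega
  have hk := h.cor_mem hv hu hvu hov
  have hk' := cor_bar h.hAB h.hcor (h.lab_mem v) (h.lab_mem u) hk
  have e1 : lab A B (sB.image (reflP (sA ∪ sB))) p' = bar A B (lab A B sA u) := by
    rw [← hue]; exact (h.lab_bar hu :)
  have e2 : lab A B (sB.image (reflP (sA ∪ sB))) q' = bar A B (lab A B sA v) := by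
    rw [← hve]; exact (h.lab_bar hv :)
  apply cor_pointwise (A := A) (p := p') (q := q') ?_ ?_ hlt (by omega) ?_ i hqi hip
  · rw [e1]; exact bar_len h.hBA _
  · rw [e2]; exact bar_len h.hBA _
  · rw [e1, e2, show p' + A.length - q' = v + A.length - u by omega]
    exact hk'

end Good
namespace Good

variable {A B X : List Bool} {sA sB : Finset ℕ}

lemma flip_occA (h : Good A B X sA sB) {p' : ℕ} (hp' : p' ∈ sB.image (reflP (sA ∪ sB))) :
    occAt A (flipWord A B sA sB X) p' := by
  obtain ⟨x, hx, hxe⟩ := Finset.mem_image.1 hp'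
  have hxs : x ∈ sA ∪ sB := Finset.mem_union_right _ hx
  have hM : fmax (sA ∪ sB) + A.length ≤ X.length := h.mem_len (fmax_mem ⟨x, hxs⟩)
  have hb := reflP_bounds hxs
  refine ⟨by rw [flipWord_length, ← hxe]; omega, ?_⟩
  intro t ht
  have hin : p' + t < X.length := by rw [← hxe]; omega
  rw [flipWord_getD hin]
  have hpm : p' ∈ sB.image (reflP (sA ∪ sB)) ∪ sA.image (reflP (sA ∪ sB)) :=
    Finset.mem_union_left _ hp'
  have hcov : p' ∈ covS A.length (sB.image (reflP (sA ∪ sB)) ∪ sA.image (reflP (sA ∪ sB)))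
      (p' + t) := Finset.mem_filter.2 ⟨hpm, by omega, by omega⟩
  rw [if_pos ⟨p', hcov⟩]
  rw [fval_spec (fun p hp q hq hle i h1 h2 => h.agree' hp hq hle h1 h2) hpm ht]
  rw [← hxe, h.lab_bar hxs]
  have e : lab A B sA x = B := by rw [lab, if_neg (fun ha => h.hdisj ha hx)]
  rw [e, bar, if_neg (fun e2 => h.hAB e2.symm)]

lemma flip_occB (h : Good A B X sA sB) {p' : ℕ} (hp' : p' ∈ sA.image (reflP (sA ∪ sB))) :
    occAt B (flipWord A B sA sB X) p' := by
  obtain ⟨x, hx, hxe⟩ := Finset.mem_image.1 hp'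
  have hxs : x ∈ sA ∪ sB := Finset.mem_union_left _ hx
  have hM : fmax (sA ∪ sB) + A.length ≤ X.length := h.mem_len (fmax_mem ⟨x, hxs⟩)
  have hb := reflP_bounds hxs
  have hBA := h.hBA
  refine ⟨by rw [flipWord_length, ← hxe, hBA]; omega, ?_⟩
  intro t ht
  have htA : t < A.length := by omega
  have hin : p' + t < X.length := by rw [← hxe]; omega
  rw [flipWord_getD hin]
  have hpm : p' ∈ sB.image (reflP (sA ∪ sB)) ∪ sA.image (reflP (sA ∪ sB)) :=
    Finset.mem_union_right _ hp'
  have hcov : p' ∈ covS A.length (sB.image (reflP (sA ∪ sB)) ∪ sA.image (reflP (sA ∪ sB)))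
      (p' + t) := Finset.mem_filter.2 ⟨hpm, by omega, by omega⟩
  rw [if_pos ⟨p', hcov⟩]
  rw [fval_spec (fun p hp q hq hle i h1 h2 => h.agree' hp hq hle h1 h2) hpm htA]
  rw [← hxe, h.lab_bar hxs]
  have e : lab A B sA x = A := by rw [lab, if_pos hx]
  rw [e, bar, if_pos rfl]

lemma flip_flipWord (h : Good A B X sA sB) :
    flipWord A B (sB.image (reflP (sA ∪ sB))) (sA.image (reflP (sA ∪ sB)))
      (flipWord A B sA sB X) = X := by
  have hA'' : (sA.image (reflP (sA ∪ sB))).image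
      (reflP (sB.image (reflP (sA ∪ sB)) ∪ sA.image (reflP (sA ∪ sB)))) = sA := by
    rw [s'_eq]; exact marks_invol Finset.subset_union_left
  have hB'' : (sB.image (reflP (sA ∪ sB))).image
      (reflP (sB.image (reflP (sA ∪ sB)) ∪ sA.image (reflP (sA ∪ sB)))) = sB := by
    rw [s'_eq]; exact marks_invol Finset.subset_union_right
  apply List.ext_getElem
  · rw [flipWord_length, flipWord_length]
  · intro i h1 h2
    rw [← List.getD_eq_getElem _ false (hn := h1), ← List.getD_eq_getElem _ false (hn := h2)]
    rw [flipWord_getD (X := flipWord A B sA sB X) (by rw [flipWord_length]; exact h2)]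
    rw [hA'', hB'', s'_eq, rho_image]
    split_ifs with hcov
    · exact h.fval_eq_word hcov
    · by_cases hspan : (sA ∪ sB).Nonempty ∧ fmin (sA ∪ sB) ≤ i ∧ i < fmax (sA ∪ sB) + A.length
      · have hMn : fmax (sA ∪ sB) + A.length ≤ X.length := h.mem_len (fmax_mem hspan.1)
        have hmm : fmin (sA ∪ sB) ≤ fmax (sA ∪ sB) := mem_le_fmax (fmin_mem hspan.1)
        have hl := h.hl
        rw [rho, if_pos hspan]
        have hjn : fmin (sA ∪ sB) + fmax (sA ∪ sB) + A.length - 1 - i < X.length := by omega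
        rw [flipWord_getD hjn]
        have hc' : ¬ (covS A.length (sB.image (reflP (sA ∪ sB)) ∪ sA.image (reflP (sA ∪ sB)))
            (fmin (sA ∪ sB) + fmax (sA ∪ sB) + A.length - 1 - i)).Nonempty := by
          rintro ⟨p', hp'c⟩
          have hpf := Finset.mem_filter.1 hp'c
          rw [s'_eq] at hpf
          obtain ⟨x, hx, hxe⟩ := Finset.mem_image.1 hpf.1
          apply hcov
          have hb1 := fmin_le_mem hx; have hb2 := mem_le_fmax hx
          simp only [reflP] at hxe
          have hpp := hpf.2
          exact ⟨x, Finset.mem_filter.2 ⟨hx, by omega, by omega⟩⟩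
        rw [if_neg hc', rho, if_pos (show (sA ∪ sB).Nonempty ∧
            fmin (sA ∪ sB) ≤ fmin (sA ∪ sB) + fmax (sA ∪ sB) + A.length - 1 - i ∧
            fmin (sA ∪ sB) + fmax (sA ∪ sB) + A.length - 1 - i < fmax (sA ∪ sB) + A.length
            from ⟨hspan.1, by omega, by omega⟩)]
        rw [show fmin (sA ∪ sB) + fmax (sA ∪ sB) + A.length - 1 -
            (fmin (sA ∪ sB) + fmax (sA ∪ sB) + A.length - 1 - i) = i by omega]
      · rw [rho, if_neg hspan]
        rw [flipWord_getD h2]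
        have hc' : ¬ (covS A.length (sB.image (reflP (sA ∪ sB)) ∪ sA.image (reflP (sA ∪ sB)))
            i).Nonempty := by
          rintro ⟨p', hp'c⟩
          have hpf := Finset.mem_filter.1 hp'c
          rw [s'_eq] at hpf
          obtain ⟨x, hx, hxe⟩ := Finset.mem_image.1 hpf.1
          have hb := reflP_bounds hx
          rw [hxe] at hb
          exact hspan ⟨⟨x, hx⟩, by omega, by omega⟩
        rw [if_neg hc', rho, if_neg hspan]

end Good
/- ### counting words -/

def allW : ℕ → Finset (List Bool)
  | 0 => {[]}
  | n+1 => (allW n).biUnion (fun X => {true :: X, false :: X})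

lemma mem_allW : ∀ {n : ℕ} {X : List Bool}, X ∈ allW n ↔ X.length = n := by
  intro n
  induction n with
  | zero => intro X; simp [allW, List.length_eq_zero_iff]
  | succ n ih =>
    intro X
    simp only [allW, Finset.mem_biUnion, Finset.mem_insert, Finset.mem_singleton]
    constructor
    · rintro ⟨Y, hY, rfl | rfl⟩ <;> simp [ih.1 hY]
    · intro hX
      match X with
      | [] => simp at hX
      | b :: Y =>
        refine ⟨Y, ih.2 (by simpa using hX), ?_⟩
        cases b <;> simp

def cfun (A B : List Bool) (n a b : ℕ) : ℕ :=
  ((allW n).filter (fun X => countOcc A X = a ∧ countOcc B X = b)).card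

lemma ncard_eq_cfun (A B : List Bool) (n a b : ℕ) :
    {X : List Bool | X.length = n ∧ countOcc A X = a ∧ countOcc B X = b}.ncard
      = cfun A B n a b := by
  rw [cfun, ← Set.ncard_coe_finset]
  congr 1
  ext X
  simp [mem_allW]

lemma cfun_zero_left {A B : List Bool} {n a b : ℕ} (ha : n + 2 ≤ a) : cfun A B n a b = 0 := by
  rw [cfun, Finset.card_eq_zero, Finset.filter_eq_empty_iff]
  intro X hX
  have h1 : countOcc A X ≤ n + 1 := by
    have := countOcc_le (W := A) (X := X); rw [mem_allW.1 hX] at this; exact this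
  rintro ⟨h2, -⟩; omega

lemma cfun_zero_right {A B : List Bool} {n a b : ℕ} (hb : n + 2 ≤ b) : cfun A B n a b = 0 := by
  rw [cfun, Finset.card_eq_zero, Finset.filter_eq_empty_iff]
  intro X hX
  have h1 : countOcc B X ≤ n + 1 := by
    have := countOcc_le (W := B) (X := X); rw [mem_allW.1 hX] at this; exact this
  rintro ⟨-, h2⟩; omega

def Qf (A B : List Bool) (n a b : ℕ) : ℕ :=
  ∑ X ∈ allW n, (countOcc A X).choose a * (countOcc B X).choose b

lemma Qf_eq_sum_cfun (A B : List Bool) (n a b : ℕ) :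
    Qf A B n a b = ∑ p ∈ Finset.range (n+2) ×ˢ Finset.range (n+2),
      (p.1.choose a * p.2.choose b) * cfun A B n p.1 p.2 := by
  rw [Qf, ← Finset.sum_fiberwise_of_maps_to
    (g := fun X => (countOcc A X, countOcc B X))
    (t := Finset.range (n+2) ×ˢ Finset.range (n+2))
    (fun X hX => by
      have h1 : countOcc A X ≤ n + 1 := by
        have := countOcc_le (W := A) (X := X); rw [mem_allW.1 hX] at this; exact this
      have h2 : countOcc B X ≤ n + 1 := by
        have := countOcc_le (W := B) (X := X); rw [mem_allW.1 hX] at this; exact this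
      simp only [Finset.mem_product, Finset.mem_range]; omega)]
  apply Finset.sum_congr rfl
  intro p hp
  have heq : ∀ X ∈ (allW n).filter (fun X => (countOcc A X, countOcc B X) = p),
      (countOcc A X).choose a * (countOcc B X).choose b = p.1.choose a * p.2.choose b := by
    intro X hX
    have hpe := (Finset.mem_filter.1 hX).2
    rw [← hpe]
  rw [Finset.sum_congr rfl heq, Finset.sum_const, smul_eq_mul]
  have hcard : ((allW n).filter (fun X => (countOcc A X, countOcc B X) = p)).card
      = cfun A B n p.1 p.2 := by
    rw [cfun]
    congr 1
    apply Finset.filter_congr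
    intro X _
    rw [Prod.ext_iff]
  rw [hcard, mul_comm]

lemma cfun_symm_of_Qf (A B : List Bool) (n : ℕ)
    (hQ : ∀ a b, Qf A B n a b = Qf A B n b a) :
    ∀ a b, cfun A B n a b = cfun A B n b a := by
  have key : ∀ m a b, 2*n+4 ≤ a + b + m → cfun A B n a b = cfun A B n b a := by
    intro m
    induction m with
    | zero =>
      intro a b hm
      rcases (show n + 2 ≤ a ∨ n + 2 ≤ b by omega) with hc | hc
      · rw [cfun_zero_left hc, cfun_zero_right hc]
      · rw [cfun_zero_right hc, cfun_zero_left hc]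
    | succ m ih =>
      intro a b hm
      by_cases hbig : n + 2 ≤ a ∨ n + 2 ≤ b
      · rcases hbig with hc | hc
        · rw [cfun_zero_left hc, cfun_zero_right hc]
        · rw [cfun_zero_right hc, cfun_zero_left hc]
      push_neg at hbig
      have hmem1 : (a, b) ∈ Finset.range (n+2) ×ˢ Finset.range (n+2) := by
        simp only [Finset.mem_product, Finset.mem_range]; omega
      have hmem2 : (b, a) ∈ Finset.range (n+2) ×ˢ Finset.range (n+2) := by
        simp only [Finset.mem_product, Finset.mem_range]; omega
      have e1 := Qf_eq_sum_cfun A B n a b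
      have e2 := Qf_eq_sum_cfun A B n b a
      rw [← Finset.add_sum_erase _ _ hmem1] at e1
      rw [← Finset.add_sum_erase _ _ hmem2] at e2
      simp only [Nat.choose_self, one_mul, mul_one] at e1 e2
      have hT : ∑ p ∈ (Finset.range (n+2) ×ˢ Finset.range (n+2)).erase (a, b),
            (p.1.choose a * p.2.choose b) * cfun A B n p.1 p.2
          = ∑ p ∈ (Finset.range (n+2) ×ˢ Finset.range (n+2)).erase (b, a),
            (p.1.choose b * p.2.choose a) * cfun A B n p.1 p.2 := by
        apply Finset.sum_nbij' (i := Prod.swap) (j := Prod.swap)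
        · intro p hp
          rw [Finset.mem_erase] at hp ⊢
          refine ⟨fun hc => hp.1 ?_, ?_⟩
          · have h3 := congrArg Prod.swap hc
            rw [Prod.swap_swap] at h3
            exact h3
          · have := hp.2
            simp only [Finset.mem_product, Finset.mem_range, Prod.fst_swap,
              Prod.snd_swap] at this ⊢
            omega
        · intro p hp
          rw [Finset.mem_erase] at hp ⊢
          refine ⟨fun hc => hp.1 ?_, ?_⟩
          · have h3 := congrArg Prod.swap hc
            rw [Prod.swap_swap] at h3
            exact h3
          · have := hp.2
            simp only [Finset.mem_product, Finset.mem_range, Prod.fst_swap,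
              Prod.snd_swap] at this ⊢
            omega
        · intro p _; exact Prod.swap_swap p
        · intro p _; exact Prod.swap_swap p
        · intro p hp
          rw [Finset.mem_erase] at hp
          simp only [Prod.fst_swap, Prod.snd_swap]
          by_cases hz : a ≤ p.1 ∧ b ≤ p.2
          · have hne : p.1 ≠ a ∨ p.2 ≠ b := by
              by_contra hc; push_neg at hc
              exact hp.1 (Prod.ext_iff.2 ⟨hc.1, hc.2⟩)
            have : cfun A B n p.1 p.2 = cfun A B n p.2 p.1 := by
              apply ih
              omega
            rw [this]; ring
          · push_neg at hz
            rcases Nat.lt_or_ge p.1 a with hlt | hge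
            · rw [Nat.choose_eq_zero_of_lt hlt]; ring
            · rw [Nat.choose_eq_zero_of_lt (hz hge)]; ring
      rw [hT] at e1
      have hq := hQ a b
      omega
  intro a b
  exact key (2*n+4) a b (by omega)
lemma marks_inv1 {sA sB : Finset ℕ} :
    (sA.image (reflP (sA ∪ sB))).image
      (reflP (sB.image (reflP (sA ∪ sB)) ∪ sA.image (reflP (sA ∪ sB)))) = sA := by
  rw [s'_eq]; exact marks_invol Finset.subset_union_left

lemma marks_inv2 {sA sB : Finset ℕ} :
    (sB.image (reflP (sA ∪ sB))).image
      (reflP (sB.image (reflP (sA ∪ sB)) ∪ sA.image (reflP (sA ∪ sB)))) = sB := by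
  rw [s'_eq]; exact marks_invol Finset.subset_union_right

def pows (n : ℕ) : Finset (Finset ℕ × Finset ℕ) :=
  (Finset.range (n+1)).powerset ×ˢ (Finset.range (n+1)).powerset

def Pset (A B : List Bool) (n a b : ℕ) : Finset ((Finset ℕ × Finset ℕ) × List Bool) :=
  (pows n ×ˢ allW n).filter
    (fun z => z.1.1.card = a ∧ z.1.2.card = b ∧ z.1.1 ⊆ occs A z.2 ∧ z.1.2 ⊆ occs B z.2)

lemma Qf_eq_card (A B : List Bool) (n a b : ℕ) :
    Qf A B n a b = (Pset A B n a b).card := by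
  rw [Pset, Finset.card_filter, Finset.sum_product, Finset.sum_comm, Qf]
  apply Finset.sum_congr rfl
  intro X hX
  rw [← Finset.card_filter]
  have hsub : occs A X ⊆ Finset.range (n+1) := by
    rw [← mem_allW.1 hX]; exact occs_subset_range
  have hsub' : occs B X ⊆ Finset.range (n+1) := by
    rw [← mem_allW.1 hX]; exact occs_subset_range
  have hset : (pows n).filter
        (fun y => y.1.card = a ∧ y.2.card = b ∧ y.1 ⊆ occs A X ∧ y.2 ⊆ occs B X)
      = (occs A X).powersetCard a ×ˢ (occs B X).powersetCard b := by
    ext y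
    simp only [Finset.mem_filter, pows, Finset.mem_product, Finset.mem_powerset,
      Finset.mem_powersetCard]
    constructor
    · rintro ⟨⟨-, -⟩, h1, h2, h3, h4⟩; exact ⟨⟨h3, h1⟩, ⟨h4, h2⟩⟩
    · rintro ⟨⟨h3, h1⟩, h4, h2⟩
      exact ⟨⟨h3.trans hsub, h4.trans hsub'⟩, h1, h2, h3, h4⟩
  rw [hset, Finset.card_product, Finset.card_powersetCard, Finset.card_powersetCard,
    countOcc_eq, countOcc_eq]

def wflip (A B : List Bool) (z : (Finset ℕ × Finset ℕ) × List Bool) :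
    (Finset ℕ × Finset ℕ) × List Bool :=
  ((z.1.2.image (reflP (z.1.1 ∪ z.1.2)), z.1.1.image (reflP (z.1.1 ∪ z.1.2))),
    flipWord A B z.1.1 z.1.2 z.2)

lemma good_of_mem {A B : List Bool} (hBA : B.length = A.length) (hAB : A ≠ B)
    (hcor : corSet A A = corSet B B) {n a b : ℕ} {z : (Finset ℕ × Finset ℕ) × List Bool}
    (hz : z ∈ Pset A B n a b) :
    Good A B z.2 z.1.1 z.1.2 ∧ z.2.length = n ∧ z.1.1.card = a ∧ z.1.2.card = b := by
  rw [Pset, Finset.mem_filter] at hz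
  obtain ⟨hzm, h1, h2, h3, h4⟩ := hz
  rw [Finset.mem_product] at hzm
  exact ⟨⟨hBA, hAB, hcor, fun p hp => mem_occs.1 (h3 hp), fun p hp => mem_occs.1 (h4 hp)⟩,
    mem_allW.1 hzm.2, h1, h2⟩

lemma wflip_mem {A B : List Bool} (hBA : B.length = A.length) (hAB : A ≠ B)
    (hcor : corSet A A = corSet B B) {n a b : ℕ} {z : (Finset ℕ × Finset ℕ) × List Bool}
    (hz : z ∈ Pset A B n a b) : wflip A B z ∈ Pset A B n b a := by
  obtain ⟨hg, hlen, hca, hcb⟩ := good_of_mem hBA hAB hcor hz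
  have hrange : ∀ t : Finset ℕ, t ⊆ z.1.1 ∪ z.1.2 →
      t.image (reflP (z.1.1 ∪ z.1.2)) ⊆ Finset.range (n+1) := by
    intro t ht y hy
    obtain ⟨x, hx, hxe⟩ := Finset.mem_image.1 hy
    have hxs := ht hx
    have h1 := (reflP_bounds hxs).2
    have h2 := hg.mem_len (fmax_mem ⟨x, hxs⟩)
    rw [hlen] at h2
    have h3 := hg.hl
    rw [Finset.mem_range, ← hxe]
    omega
  rw [Pset, Finset.mem_filter, Finset.mem_product]
  refine ⟨⟨?_, ?_⟩, ?_, ?_, ?_, ?_⟩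
  · rw [pows, Finset.mem_product]
    exact ⟨Finset.mem_powerset.2 (hrange _ Finset.subset_union_right),
      Finset.mem_powerset.2 (hrange _ Finset.subset_union_left)⟩
  · exact mem_allW.2 (flipWord_length.trans hlen)
  · rw [show (wflip A B z).1.1 = z.1.2.image (reflP (z.1.1 ∪ z.1.2)) from rfl,
      Finset.card_image_of_injOn (reflP_injOn Finset.subset_union_right)]
    exact hcb
  · rw [show (wflip A B z).1.2 = z.1.1.image (reflP (z.1.1 ∪ z.1.2)) from rfl,
      Finset.card_image_of_injOn (reflP_injOn Finset.subset_union_left)]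
    exact hca
  · intro p hp
    exact mem_occs.2 (hg.flip_occA hp)
  · intro p hp
    exact mem_occs.2 (hg.flip_occB hp)

lemma wflip_invol {A B : List Bool} (hBA : B.length = A.length) (hAB : A ≠ B)
    (hcor : corSet A A = corSet B B) {n a b : ℕ} {z : (Finset ℕ × Finset ℕ) × List Bool}
    (hz : z ∈ Pset A B n a b) : wflip A B (wflip A B z) = z := by
  obtain ⟨hg, -, -, -⟩ := good_of_mem hBA hAB hcor hz
  have e1 : (wflip A B (wflip A B z)).1.1 = z.1.1 := marks_inv1
  have e2 : (wflip A B (wflip A B z)).1.2 = z.1.2 := marks_inv2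
  have e3 : (wflip A B (wflip A B z)).2 = z.2 := hg.flip_flipWord
  exact Prod.ext (Prod.ext e1 e2) e3

lemma Qf_symm {A B : List Bool} (hBA : B.length = A.length) (hAB : A ≠ B)
    (hcor : corSet A A = corSet B B) (n a b : ℕ) : Qf A B n a b = Qf A B n b a := by
  rw [Qf_eq_card, Qf_eq_card]
  exact Finset.card_bij' (fun z _ => wflip A B z) (fun z _ => wflip A B z)
    (fun z hz => wflip_mem hBA hAB hcor hz) (fun z hz => wflip_mem hBA hAB hcor hz)
    (fun z hz => wflip_invol hBA hAB hcor hz) (fun z hz => wflip_invol hBA hAB hcor hz)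


/-- Main theorem: for words `A`, `B` of length `ℓ` with
`Cor(A,A) = Cor(B,B)`, for every `n ≥ 1` and every `(a,b)`, the number of
words of length `n` with `(N_A, N_B) = (a,b)` equals the number with
`(N_A, N_B) = (b,a)`; i.e. `(N_A(X_n), N_B(X_n))` and `(N_B(X_n), N_A(X_n))`
have the same distribution for `X_n` uniform on `{H,T}ⁿ`. -/
theorem litt_fair (ℓ : ℕ) (A B : List Bool)
    (hA : A.length = ℓ) (hB : B.length = ℓ) (hcor : corSet A A = corSet B B)
    (n : ℕ) (hn : 1 ≤ n) (a b : ℕ) :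
    {X : List Bool | X.length = n ∧ countOcc A X = a ∧ countOcc B X = b}.ncard =
    {X : List Bool | X.length = n ∧ countOcc A X = b ∧ countOcc B X = a}.ncard := by
  rcases eq_or_ne A B with rfl | hAB
  · have hsets : {X : List Bool | X.length = n ∧ countOcc A X = a ∧ countOcc A X = b}
        = {X : List Bool | X.length = n ∧ countOcc A X = b ∧ countOcc A X = a} := by
      ext X
      constructor <;> rintro ⟨h1, h2, h3⟩ <;> exact ⟨h1, h3, h2⟩
    rw [hsets]
  · have hBA : B.length = A.length := by rw [hA, hB]
    rw [ncard_eq_cfun, ncard_eq_cfun]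
    exact cfun_symm_of_Qf A B n (fun a b => Qf_symm hBA hAB hcor n a b) a b
end

section
/- Corollary of the main theorem: if A and B are words of length ℓ with Cor(A,A) = Cor(B,B), then for every n, the number of words X of length n with N_A(X) > N_B(X) equals the number of words X of length n with N_B(X) > N_A(X); i.e., P_n(Alice wins) = P_n(Bob wins) in Litt's game. -/
namespace LittAux
open Finset
open scoped Classical

def wc (A B : List Bool) (t : Bool) : List Bool := if t then A else B

def matchAt (W X : List Bool) (p : ℕ) : Prop := (X.drop p).take W.length = W

noncomputable def words (n : ℕ) : Finset (List Bool) :=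
  (Finset.univ : Finset (Fin n → Bool)).image List.ofFn

lemma mem_words {n : ℕ} {X : List Bool} : X ∈ words n ↔ X.length = n := by
  constructor
  · intro h
    simp only [words, mem_image] at h
    obtain ⟨f, _, rfl⟩ := h
    simp
  · intro h
    subst h
    exact mem_image.2 ⟨X.get, mem_univ _, List.ofFn_get X⟩

lemma wc_length {A B : List Bool} {ℓ : ℕ} (hA : A.length = ℓ) (hB : B.length = ℓ) (t : Bool) :
    (wc A B t).length = ℓ := by cases t <;> simpa [wc]

lemma eq_iff_ptws {C D : List Bool} (h : C.length = D.length) :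
    C = D ↔ ∀ j < C.length, C.getD j false = D.getD j false := by
  constructor
  · rintro rfl _ _; rfl
  · intro hj
    apply List.ext_getElem h
    intro j h1 h2
    have := hj j h1
    rwa [List.getD_eq_getElem _ _ h1, List.getD_eq_getElem _ _ h2] at this

lemma ptws_iff {C D : List Bool} {ℓ d : ℕ} (hC : C.length = ℓ) (hD : D.length = ℓ) (hd : d ≤ ℓ) :
    (∀ j < ℓ - d, C.getD (d + j) false = D.getD j false) ↔ C.drop d = D.take (ℓ - d) := by
  rw [eq_iff_ptws (by rw [List.length_drop, List.length_take, hC, hD]; omega)]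
  simp only [List.length_drop, hC]
  constructor
  · intro h j hj
    have h1 := h j hj
    rw [List.getD_eq_getElem _ _ (by omega : d + j < C.length),
        List.getD_eq_getElem _ _ (by omega : j < D.length)] at h1
    rw [List.getD_eq_getElem _ _ (show j < (C.drop d).length by simp [hC]; omega),
        List.getD_eq_getElem _ _ (show j < (D.take (ℓ - d)).length by simp [hD]; omega),
        List.getElem_drop, List.getElem_take]
    exact h1
  · intro h j hj
    have h1 := h j hj
    rw [List.getD_eq_getElem _ _ (show j < (C.drop d).length by simp [hC]; omega),
        List.getD_eq_getElem _ _ (show j < (D.take (ℓ - d)).length by simp [hD]; omega),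
        List.getElem_drop, List.getElem_take] at h1
    rw [List.getD_eq_getElem _ _ (by omega : d + j < C.length),
        List.getD_eq_getElem _ _ (by omega : j < D.length)]
    exact h1

lemma matchAt_iff {Wd X : List Bool} {p : ℕ} (hW : 0 < Wd.length) :
    matchAt Wd X p ↔ p + Wd.length ≤ X.length ∧
      ∀ j < Wd.length, X.getD (p + j) false = Wd.getD j false := by
  constructor
  · intro h
    have hlen : (List.take Wd.length (List.drop p X)).length = Wd.length := by rw [h]
    rw [List.length_take, List.length_drop] at hlen
    have hb : p + Wd.length ≤ X.length := by omega
    refine ⟨hb, fun j hj => ?_⟩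
    have hx : p + j < X.length := by omega
    have e : Wd.getD j false = ((X.drop p).take Wd.length).getD j false := by rw [h]
    rw [List.getD_eq_getElem _ _ (show j < ((X.drop p).take Wd.length).length by rw [h]; exact hj),
        List.getElem_take, List.getElem_drop] at e
    rw [List.getD_eq_getElem _ _ hj] at e
    rw [List.getD_eq_getElem _ _ hx, List.getD_eq_getElem _ _ hj]
    exact e.symm
  · rintro ⟨hb, hj⟩
    apply List.ext_getElem
    · rw [List.length_take, List.length_drop]; omega
    · intro j h1 h2
      have := hj j h2
      rw [List.getD_eq_getElem _ _ (show p + j < X.length by omega),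
          List.getD_eq_getElem _ _ h2] at this
      rw [List.getElem_take, List.getElem_drop]
      exact this

end LittAux

section Part2
namespace LittAux
open Finset
open scoped Classical

variable (A B : List Bool) (ℓ n : ℕ)

def Uc : Finset (ℕ × Bool) := (range (n - ℓ + 1)) ×ˢ (Finset.univ : Finset Bool)

noncomputable def occ (X : List Bool) : Finset (ℕ × Bool) :=
  (Uc ℓ n).filter fun pt => matchAt (wc A B pt.2) X pt.1

def sat (c : Finset (ℕ × Bool)) (X : List Bool) : Prop :=
  ∀ pt ∈ c, matchAt (wc A B pt.2) X pt.1

noncomputable def V (c : Finset (ℕ × Bool)) : ℕ := ((words n).filter (sat A B c)).card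

noncomputable def Wf (c : Finset (ℕ × Bool)) : ℕ :=
  ((words n).filter fun X => occ A B ℓ n X = c).card

def flipP (pt : ℕ × Bool) : ℕ × Bool := (n - ℓ - pt.1, !pt.2)

noncomputable def flipC (c : Finset (ℕ × Bool)) : Finset (ℕ × Bool) := c.image (flipP ℓ n)

def covP (c : Finset (ℕ × Bool)) (x : ℕ) : Prop :=
  ∃ pt, pt ∈ c ∧ pt.1 ≤ x ∧ x < pt.1 + (wc A B pt.2).length

noncomputable def tmpl (c : Finset (ℕ × Bool)) (x : ℕ) : Bool :=
  if h : covP A B c x then (wc A B h.choose.2).getD (x - h.choose.1) false else false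

noncomputable def Phi (c : Finset (ℕ × Bool)) (X : List Bool) : List Bool :=
  List.ofFn fun i : Fin n => if covP A B c i.val then tmpl A B c i.val else X.getD (n - 1 - i.val) false

def Agree (c : Finset (ℕ × Bool)) : Prop :=
  ∀ pt qt : ℕ × Bool, pt ∈ c → qt ∈ c → ∀ x : ℕ,
    pt.1 ≤ x → x < pt.1 + (wc A B pt.2).length →
    qt.1 ≤ x → x < qt.1 + (wc A B qt.2).length →
    (wc A B pt.2).getD (x - pt.1) false = (wc A B qt.2).getD (x - qt.1) false

variable {A B ℓ n}

lemma mem_Uc {pt : ℕ × Bool} : pt ∈ Uc ℓ n ↔ pt.1 ≤ n - ℓ := by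
  simp [Uc, Finset.mem_product, Finset.mem_range, Nat.lt_succ_iff]

lemma flipP_mem_Uc {pt : ℕ × Bool} (_ : pt ∈ Uc ℓ n) : flipP ℓ n pt ∈ Uc ℓ n := by
  rw [mem_Uc]; simp only [flipP]; omega

lemma flipP_flipP {pt : ℕ × Bool} (h : pt ∈ Uc ℓ n) : flipP ℓ n (flipP ℓ n pt) = pt := by
  have := mem_Uc.1 h
  obtain ⟨p, t⟩ := pt
  simp only [flipP] at *
  refine Prod.ext ?_ (by simp)
  simp only
  omega

lemma flipP_injOn {c : Finset (ℕ × Bool)} (hc : c ⊆ Uc ℓ n) :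
    ∀ pt ∈ c, ∀ qt ∈ c, flipP ℓ n pt = flipP ℓ n qt → pt = qt := by
  intro pt hpt qt hqt h
  have := congrArg (flipP ℓ n) h
  rwa [flipP_flipP (hc hpt), flipP_flipP (hc hqt)] at this

lemma flipC_subset_Uc {c : Finset (ℕ × Bool)} (hc : c ⊆ Uc ℓ n) : flipC ℓ n c ⊆ Uc ℓ n := by
  intro pt hpt
  obtain ⟨qt, hqt, rfl⟩ := Finset.mem_image.1 hpt
  exact flipP_mem_Uc (hc hqt)

lemma flipC_flipC {c : Finset (ℕ × Bool)} (hc : c ⊆ Uc ℓ n) : flipC ℓ n (flipC ℓ n c) = c := by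
  rw [flipC, flipC, Finset.image_image]
  have : ∀ pt ∈ c, (flipP ℓ n ∘ flipP ℓ n) pt = id pt := fun pt hpt => flipP_flipP (hc hpt)
  rw [Finset.image_congr this, Finset.image_id]

lemma flipC_card {c : Finset (ℕ × Bool)} (hc : c ⊆ Uc ℓ n) : (flipC ℓ n c).card = c.card :=
  Finset.card_image_of_injOn (flipP_injOn hc)

lemma flipC_subset_flipC {c c' : Finset (ℕ × Bool)} (hc : c ⊆ Uc ℓ n) (hc' : c' ⊆ Uc ℓ n) :
    flipC ℓ n c ⊆ flipC ℓ n c' ↔ c ⊆ c' := by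
  constructor
  · intro h
    have := Finset.image_subset_image (f := flipP ℓ n) h
    rwa [← flipC, ← flipC, flipC_flipC hc, flipC_flipC hc'] at this
  · exact Finset.image_subset_image

lemma flipC_ssubset_flipC {c c' : Finset (ℕ × Bool)} (hc : c ⊆ Uc ℓ n) (hc' : c' ⊆ Uc ℓ n) :
    flipC ℓ n c ⊂ flipC ℓ n c' ↔ c ⊂ c' := by
  rw [Finset.ssubset_iff_subset_ne, Finset.ssubset_iff_subset_ne, flipC_subset_flipC hc hc']
  constructor
  · rintro ⟨h1, h2⟩
    exact ⟨h1, fun h => h2 (by rw [h])⟩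
  · rintro ⟨h1, h2⟩
    refine ⟨h1, fun h => h2 ?_⟩
    have := congrArg (flipC ℓ n) h
    rwa [flipC_flipC hc, flipC_flipC hc'] at this

end LittAux
end Part2

section Part3
namespace LittAux
open Finset
open scoped Classical

variable {A B : List Bool} {ℓ n : ℕ}

lemma agree_of_sat (hA : A.length = ℓ) (hB : B.length = ℓ) (hl1 : 0 < ℓ)
    {c : Finset (ℕ × Bool)} {X : List Bool}
    (hsat : sat A B c X) : Agree A B c := by
  intro pt qt hpt hqt x h1 h2 h3 h4
  have e1 := ((matchAt_iff (by rw [wc_length hA hB]; exact hl1)).1 (hsat pt hpt)).2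
    (x - pt.1) (by omega)
  have e2 := ((matchAt_iff (by rw [wc_length hA hB]; exact hl1)).1 (hsat qt hqt)).2
    (x - qt.1) (by omega)
  rw [show pt.1 + (x - pt.1) = x by omega] at e1
  rw [show qt.1 + (x - qt.1) = x by omega] at e2
  rw [← e1, ← e2]

lemma cor_transfer (hA : A.length = ℓ) (hB : B.length = ℓ)
    (hcor : corSet A A = corSet B B) {d : ℕ} (h1 : 1 ≤ d) (h2 : d < ℓ) :
    A.drop d = A.take (ℓ - d) ↔ B.drop d = B.take (ℓ - d) := by
  have e : ℓ - (ℓ - d) = d := by omega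
  have mA : (ℓ - d) ∈ corSet A A ↔ A.drop d = A.take (ℓ - d) := by
    rw [corSet, Finset.mem_filter, Finset.mem_Icc, hA, e]
    constructor
    · exact fun h => h.2
    · exact fun h => ⟨⟨by omega, by omega⟩, h⟩
  have mB : (ℓ - d) ∈ corSet B B ↔ B.drop d = B.take (ℓ - d) := by
    rw [corSet, Finset.mem_filter, Finset.mem_Icc, hB, e]
    constructor
    · exact fun h => h.2
    · exact fun h => ⟨⟨by omega, by omega⟩, h⟩
  rw [← mA, ← mB, hcor]

lemma agree_flip (hA : A.length = ℓ) (hB : B.length = ℓ)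
    (hcor : corSet A A = corSet B B) (hAB : A ≠ B) (hl1 : 0 < ℓ) (hln : ℓ ≤ n)
    {c : Finset (ℕ × Bool)} (hc : c ⊆ Uc ℓ n) (hag : Agree A B c) :
    Agree A B (flipC ℓ n c) := by
  have hwl : ∀ t, (wc A B t).length = ℓ := wc_length hA hB
  -- main asymmetric claim
  have main : ∀ p t q s x, (p, t) ∈ c → (q, s) ∈ c → p ≤ q →
      n - ℓ - p ≤ x → x < n - ℓ - p + ℓ → n - ℓ - q ≤ x → x < n - ℓ - q + ℓ →
      (wc A B (!t)).getD (x - (n - ℓ - p)) false = (wc A B (!s)).getD (x - (n - ℓ - q)) false := by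
    intro p t q s x hptc hqsc hpq h1 h2 h3 h4
    have hup : p ≤ n - ℓ := mem_Uc.1 (hc hptc)
    have huq : q ≤ n - ℓ := mem_Uc.1 (hc hqsc)
    rcases Nat.eq_or_lt_of_le hpq with rfl | hlt
    · -- same position: colors must match
      have hts : wc A B t = wc A B s := by
        rw [eq_iff_ptws (by rw [hwl, hwl])]
        intro j hj
        rw [hwl] at hj
        have := hag (p, t) (p, s) hptc hqsc (p + j) (by omega) (by simp only [hwl]; omega)
          (by omega) (by simp only [hwl]; omega)
        simpa using this
      have : t = s := by
        cases t <;> cases s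
        · rfl
        · exact absurd (by simpa [wc] using hts.symm) hAB
        · exact absurd (by simpa [wc] using hts) hAB
        · rfl
      subst this
      rfl
    · -- p < q
      set d := q - p with hd
      by_cases hdl : ℓ ≤ d
      · exfalso; omega
      · have hd1 : 1 ≤ d := by omega
        have hfwd : (wc A B t).drop d = (wc A B s).take (ℓ - d) := by
          rw [← ptws_iff (hwl t) (hwl s) (by omega)]
          intro j hj
          have := hag (p, t) (q, s) hptc hqsc (q + j) (by omega) (by simp only [hwl]; omega)
            (by omega) (by simp only [hwl]; omega)
          rw [show q + j - p = d + j by omega, show q + j - q = j by omega] at this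
          exact this
        have hgoal : (wc A B (!s)).drop d = (wc A B (!t)).take (ℓ - d) := by
          cases t <;> cases s <;>
            simp only [wc, Bool.not_true, Bool.not_false, if_true, if_false] at hfwd ⊢
          · exact (cor_transfer hA hB hcor hd1 (by omega)).2 hfwd
          · exact hfwd
          · exact hfwd
          · exact (cor_transfer hA hB hcor hd1 (by omega)).1 hfwd
        have hptw := (ptws_iff (hwl (!s)) (hwl (!t)) (by omega)).2 hgoal
        have hjlt : x - (n - ℓ - p) < ℓ - d := by omega
        have := hptw (x - (n - ℓ - p)) hjlt
        rw [show d + (x - (n - ℓ - p)) = x - (n - ℓ - q) by omega] at this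
        exact this.symm
  -- assemble
  intro pt' qt' hpt' hqt' x h1 h2 h3 h4
  obtain ⟨⟨p, t⟩, hptc, hpt⟩ := Finset.mem_image.1 hpt'
  obtain ⟨⟨q, s⟩, hqsc, hqs⟩ := Finset.mem_image.1 hqt'
  have ep : pt' = (n - ℓ - p, !t) := hpt.symm
  have eq' : qt' = (n - ℓ - q, !s) := hqs.symm
  subst ep; subst eq'
  simp only at h1 h2 h3 h4 ⊢
  rw [hwl] at h2 h4
  rcases le_total p q with hpq | hqp
  · exact main p t q s x hptc hqsc hpq h1 h2 h3 h4
  · exact (main q s p t x hqsc hptc hqp h3 h4 h1 h2).symm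

end LittAux
end Part3

section Part4
namespace LittAux
open Finset
open scoped Classical

variable {A B : List Bool} {ℓ n : ℕ}

lemma tmpl_spec (hag : Agree A B c) {p : ℕ} {t : Bool} {x : ℕ}
    (h : (p, t) ∈ c) (h1 : p ≤ x) (h2 : x < p + (wc A B t).length) :
    tmpl A B c x = (wc A B t).getD (x - p) false := by
  have hcov : covP A B c x := ⟨(p, t), h, h1, h2⟩
  rw [tmpl, dif_pos hcov]
  obtain ⟨hm, ha, hb⟩ := hcov.choose_spec
  exact hag hcov.choose (p, t) hm h x ha hb h1 h2

lemma tmpl_eq_of_sat (hA : A.length = ℓ) (hB : B.length = ℓ) (hl1 : 0 < ℓ)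
    {c : Finset (ℕ × Bool)} {X : List Bool}
    (hsat : sat A B c X) {x : ℕ} (hcov : covP A B c x) :
    tmpl A B c x = X.getD x false := by
  rw [tmpl, dif_pos hcov]
  obtain ⟨hm, ha, hb⟩ := hcov.choose_spec
  have hw : 0 < (wc A B hcov.choose.2).length := by rw [wc_length hA hB]; exact hl1
  have := ((matchAt_iff hw).1 (hsat _ hm)).2 (x - hcov.choose.1) (by omega)
  rw [show hcov.choose.1 + (x - hcov.choose.1) = x by omega] at this
  exact this.symm

lemma covP_flip (hA : A.length = ℓ) (hB : B.length = ℓ) (hln : ℓ ≤ n)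
    {c : Finset (ℕ × Bool)} (hc : c ⊆ Uc ℓ n) {x : ℕ} (hx : x < n) :
    covP A B (flipC ℓ n c) x ↔ covP A B c (n - 1 - x) := by
  have hwl : ∀ t, (wc A B t).length = ℓ := wc_length hA hB
  constructor
  · rintro ⟨pt', hp', h1, h2⟩
    obtain ⟨⟨p, t⟩, hptc, hpt⟩ := Finset.mem_image.1 hp'
    have hup : p ≤ n - ℓ := mem_Uc.1 (hc hptc)
    have ep : pt' = (n - ℓ - p, !t) := hpt.symm
    subst ep
    simp only at h1 h2
    rw [hwl] at h2
    exact ⟨(p, t), hptc, by omega, by rw [hwl]; omega⟩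
  · rintro ⟨⟨p, t⟩, hptc, h1, h2⟩
    have hup : p ≤ n - ℓ := mem_Uc.1 (hc hptc)
    rw [hwl] at h2
    refine ⟨flipP ℓ n (p, t), Finset.mem_image_of_mem _ hptc, ?_, ?_⟩
    · simp only [flipP]; omega
    · simp only [flipP, hwl]; omega

lemma Phi_length (c : Finset (ℕ × Bool)) (X : List Bool) : (Phi A B n c X).length = n := by
  simp [Phi]

lemma Phi_getD {c : Finset (ℕ × Bool)} {X : List Bool} {x : ℕ} (hx : x < n) :
    (Phi A B n c X).getD x false =
      if covP A B c x then tmpl A B c x else X.getD (n - 1 - x) false := by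
  rw [Phi, List.getD_eq_getElem _ _ (by simpa using hx), List.getElem_ofFn]

lemma sat_Phi (hA : A.length = ℓ) (hB : B.length = ℓ) (hl1 : 0 < ℓ) (hln : ℓ ≤ n)
    {d : Finset (ℕ × Bool)} (hd : d ⊆ Uc ℓ n) (hag : Agree A B d) (X : List Bool) :
    sat A B d (Phi A B n d X) := by
  intro pt hpt
  have hup : pt.1 ≤ n - ℓ := mem_Uc.1 (hd hpt)
  have hw : (wc A B pt.2).length = ℓ := wc_length hA hB _
  rw [matchAt_iff (by omega)]
  refine ⟨by rw [Phi_length, hw]; omega, fun j hj => ?_⟩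
  rw [hw] at hj
  have hx : pt.1 + j < n := by omega
  rw [Phi_getD hx, if_pos ⟨pt, hpt, by omega, by rw [hw]; omega⟩]
  have := tmpl_spec hag (Prod.mk.eta (p := pt) ▸ hpt) (show pt.1 ≤ pt.1 + j by omega)
    (show pt.1 + j < pt.1 + (wc A B pt.2).length by rw [hw]; omega)
  rw [this, Nat.add_sub_cancel_left]

lemma Phi_Phi (hA : A.length = ℓ) (hB : B.length = ℓ) (hl1 : 0 < ℓ) (hln : ℓ ≤ n)
    {c : Finset (ℕ × Bool)} (hc : c ⊆ Uc ℓ n) {X : List Bool} (hX : X.length = n)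
    (hsat : sat A B c X) :
    Phi A B n c (Phi A B n (flipC ℓ n c) X) = X := by
  rw [eq_iff_ptws (by rw [Phi_length, hX])]
  intro j hj
  rw [Phi_length] at hj
  rw [Phi_getD hj]
  by_cases hcv : covP A B c j
  · rw [if_pos hcv, tmpl_eq_of_sat hA hB hl1 hsat hcv]
  · rw [if_neg hcv]
    have hn1 : 0 < n := by omega
    have hj2 : n - 1 - j < n := by omega
    rw [Phi_getD hj2, if_neg, show n - 1 - (n - 1 - j) = j by omega]
    intro h
    have := (covP_flip hA hB hln hc hj2).1 h
    rw [show n - 1 - (n - 1 - j) = j by omega] at this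
    exact hcv this

lemma V_flip (hA : A.length = ℓ) (hB : B.length = ℓ)
    (hcor : corSet A A = corSet B B) (hAB : A ≠ B) (hl1 : 0 < ℓ) (hln : ℓ ≤ n)
    {c : Finset (ℕ × Bool)} (hc : c ⊆ Uc ℓ n) :
    V A B n c = V A B n (flipC ℓ n c) := by
  rw [V, V]
  apply Finset.card_bij' (i := fun X _ => Phi A B n (flipC ℓ n c) X)
    (j := fun X _ => Phi A B n c X)
  · intro X hX
    obtain ⟨hXw, hXs⟩ := Finset.mem_filter.1 hX
    have hag : Agree A B c := agree_of_sat hA hB hl1 hXs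
    have hag' : Agree A B (flipC ℓ n c) := agree_flip hA hB hcor hAB hl1 hln hc hag
    exact Finset.mem_filter.2 ⟨mem_words.2 (Phi_length _ _),
      sat_Phi hA hB hl1 hln (flipC_subset_Uc hc) hag' X⟩
  · intro X hX
    obtain ⟨hXw, hXs⟩ := Finset.mem_filter.1 hX
    have hag' : Agree A B (flipC ℓ n c) := agree_of_sat hA hB hl1 hXs
    have hag : Agree A B c := by
      have := agree_flip hA hB hcor hAB hl1 hln (flipC_subset_Uc hc) hag'
      rwa [flipC_flipC hc] at this
    exact Finset.mem_filter.2 ⟨mem_words.2 (Phi_length _ _), sat_Phi hA hB hl1 hln hc hag X⟩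
  · intro X hX
    obtain ⟨hXw, hXs⟩ := Finset.mem_filter.1 hX
    exact Phi_Phi hA hB hl1 hln hc (mem_words.1 hXw) hXs
  · intro X hX
    obtain ⟨hXw, hXs⟩ := Finset.mem_filter.1 hX
    have := Phi_Phi hA hB hl1 hln (flipC_subset_Uc hc) (mem_words.1 hXw) hXs
    rwa [flipC_flipC hc] at this

end LittAux
end Part4

section Part5
namespace LittAux
open Finset
open scoped Classical

variable {A B : List Bool} {ℓ n : ℕ}

lemma occ_subset (X : List Bool) : occ A B ℓ n X ⊆ Uc ℓ n := Finset.filter_subset _ _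

lemma sat_iff_subset_occ {c : Finset (ℕ × Bool)} (hc : c ⊆ Uc ℓ n) {X : List Bool} :
    sat A B c X ↔ c ⊆ occ A B ℓ n X := by
  constructor
  · intro h pt hpt
    exact Finset.mem_filter.2 ⟨hc hpt, h pt hpt⟩
  · intro h pt hpt
    exact (Finset.mem_filter.1 (h hpt)).2

lemma V_eq_sum {d : Finset (ℕ × Bool)} (hd : d ⊆ Uc ℓ n) :
    V A B n d = ∑ c' ∈ (Uc ℓ n).powerset.filter (fun c' => d ⊆ c'), Wf A B ℓ n c' := by
  rw [V]
  have h1 : (words n).filter (sat A B d) =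
      (words n).filter (fun X => d ⊆ occ A B ℓ n X) :=
    Finset.filter_congr (fun X _ => by rw [sat_iff_subset_occ hd])
  rw [h1, Finset.card_eq_sum_card_fiberwise
    (f := occ A B ℓ n) (t := (Uc ℓ n).powerset.filter (fun c' => d ⊆ c'))
    (fun X hX => Finset.mem_filter.2
      ⟨Finset.mem_powerset.2 (occ_subset X), (Finset.mem_filter.1 hX).2⟩)]
  apply Finset.sum_congr rfl
  intro c' hc'
  obtain ⟨hcp, hdc⟩ := Finset.mem_filter.1 hc'
  rw [Wf]
  congr 1
  rw [Finset.filter_filter]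
  apply Finset.filter_congr
  intro X _
  constructor
  · exact fun h => h.2
  · intro h
    exact ⟨by rw [h]; exact hdc, h⟩

lemma mobius {d : Finset (ℕ × Bool)} (hd : d ⊆ Uc ℓ n) :
    V A B n d = Wf A B ℓ n d +
      ∑ c' ∈ (Uc ℓ n).powerset.filter (fun c' => d ⊂ c'), Wf A B ℓ n c' := by
  rw [V_eq_sum hd]
  have hsplit : (Uc ℓ n).powerset.filter (fun c' => d ⊆ c') =
      insert d ((Uc ℓ n).powerset.filter (fun c' => d ⊂ c')) := by
    ext c'
    simp only [Finset.mem_filter, Finset.mem_insert, Finset.mem_powerset]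
    constructor
    · rintro ⟨h1, h2⟩
      rcases h2.ssubset_or_eq with h | h
      · exact Or.inr ⟨h1, h⟩
      · exact Or.inl h.symm
    · rintro (rfl | ⟨h1, h2⟩)
      · exact ⟨hd, subset_rfl⟩
      · exact ⟨h1, h2.subset⟩
  rw [hsplit, Finset.sum_insert (by
    simp only [Finset.mem_filter]
    rintro ⟨-, h⟩
    exact (ssubset_irrefl d) h)]

lemma W_flip (hA : A.length = ℓ) (hB : B.length = ℓ)
    (hcor : corSet A A = corSet B B) (hAB : A ≠ B) (hl1 : 0 < ℓ) (hln : ℓ ≤ n) :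
    ∀ m : ℕ, ∀ c : Finset (ℕ × Bool), c ⊆ Uc ℓ n → (Uc ℓ n).card - c.card ≤ m →
      Wf A B ℓ n c = Wf A B ℓ n (flipC ℓ n c) := by
  intro m
  induction m with
  | zero =>
    intro c hc hcard
    have hcle : c.card ≤ (Uc ℓ n).card := Finset.card_le_card hc
    have hceq : c = Uc ℓ n := Finset.eq_of_subset_of_card_le hc (by omega)
    have hfix : flipC ℓ n c = c := by
      rw [hceq]
      exact Finset.eq_of_subset_of_card_le (flipC_subset_Uc subset_rfl)
        (le_of_eq (flipC_card subset_rfl).symm)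
    rw [hfix]
  | succ m ih =>
    intro c hc hcard
    have h1 := mobius (A := A) (B := B) hc
    have h2 := mobius (A := A) (B := B) (flipC_subset_Uc hc)
    have hV : V A B n c = V A B n (flipC ℓ n c) := V_flip hA hB hcor hAB hl1 hln hc
    have hS : ∑ c' ∈ (Uc ℓ n).powerset.filter (fun c' => c ⊂ c'), Wf A B ℓ n c' =
        ∑ c' ∈ (Uc ℓ n).powerset.filter (fun c' => flipC ℓ n c ⊂ c'), Wf A B ℓ n c' := by
      have himg : (Uc ℓ n).powerset.filter (fun c' => flipC ℓ n c ⊂ c') =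
          ((Uc ℓ n).powerset.filter (fun c' => c ⊂ c')).image (flipC ℓ n) := by
        ext c''
        simp only [Finset.mem_image, Finset.mem_filter, Finset.mem_powerset]
        constructor
        · rintro ⟨h1', h2'⟩
          refine ⟨flipC ℓ n c'', ⟨flipC_subset_Uc h1', ?_⟩, flipC_flipC h1'⟩
          have := (flipC_ssubset_flipC (c := flipC ℓ n c) (c' := c'')
            (flipC_subset_Uc hc) h1').2 h2'
          rwa [flipC_flipC hc] at this
        · rintro ⟨c', ⟨h1', h2'⟩, rfl⟩
          exact ⟨flipC_subset_Uc h1', (flipC_ssubset_flipC hc h1').2 h2'⟩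
      rw [himg, Finset.sum_image (fun x hx y hy h =>
        by
          obtain ⟨hx1, -⟩ := Finset.mem_filter.1 hx
          obtain ⟨hy1, -⟩ := Finset.mem_filter.1 hy
          have := congrArg (flipC ℓ n) h
          rwa [flipC_flipC (Finset.mem_powerset.1 hx1),
               flipC_flipC (Finset.mem_powerset.1 hy1)] at this)]
      apply Finset.sum_congr rfl
      intro c' hc'
      obtain ⟨h1', h2'⟩ := Finset.mem_filter.1 hc'
      have hsub := Finset.mem_powerset.1 h1'
      have hlt : c.card < c'.card := Finset.card_lt_card h2'
      have hle : c'.card ≤ (Uc ℓ n).card := Finset.card_le_card hsub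
      exact ih c' hsub (by omega)
    omega

end LittAux
end Part5

section Part6
namespace LittAux
open Finset
open scoped Classical

variable {A B : List Bool} {ℓ n : ℕ}

noncomputable def cnt (t : Bool) (c : Finset (ℕ × Bool)) : ℕ :=
  (c.filter fun pt => pt.2 = t).card

lemma countOcc_eq_cnt (hA : A.length = ℓ) (hB : B.length = ℓ) (hl1 : 0 < ℓ) (hln : ℓ ≤ n)
    {X : List Bool} (hX : X.length = n) (t : Bool) :
    countOcc (wc A B t) X = cnt t (occ A B ℓ n X) := by
  have hwl : (wc A B t).length = ℓ := wc_length hA hB t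
  have step1 : countOcc (wc A B t) X =
      ((range (n - ℓ + 1)).filter (fun p => matchAt (wc A B t) X p)).card := by
    rw [countOcc, hX]
    congr 1
    ext i
    simp only [Finset.mem_filter, Finset.mem_range, Nat.lt_succ_iff, matchAt, hwl]
    constructor
    · rintro ⟨h1, h2, h3⟩
      exact ⟨by omega, h3⟩
    · rintro ⟨h1, h2⟩
      exact ⟨by omega, by omega, h2⟩
  have step2 : (occ A B ℓ n X).filter (fun pt => pt.2 = t) =
      ((range (n - ℓ + 1)).filter (fun p => matchAt (wc A B t) X p)).image
        (fun p => (p, t)) := by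
    ext pt
    obtain ⟨p, b⟩ := pt
    simp only [occ, Finset.mem_filter, Finset.mem_image, Finset.mem_range, mem_Uc,
      Nat.lt_succ_iff]
    constructor
    · rintro ⟨⟨h1, h2⟩, h3⟩
      obtain rfl : b = t := h3
      exact ⟨p, ⟨by omega, h2⟩, rfl⟩
    · rintro ⟨q, ⟨hq1, hq2⟩, hqe⟩
      cases hqe
      exact ⟨⟨by omega, hq2⟩, rfl⟩
  rw [step1, cnt, step2, Finset.card_image_of_injective _ (fun a b h => congrArg Prod.fst h)]

lemma cnt_flip {c : Finset (ℕ × Bool)} (hc : c ⊆ Uc ℓ n) (t : Bool) :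
    cnt t (flipC ℓ n c) = cnt (!t) c := by
  rw [cnt, flipC, Finset.filter_image, Finset.card_image_of_injOn
    (fun x hx y hy h => flipP_injOn hc x (Finset.filter_subset _ _ (Finset.mem_coe.1 hx))
      y (Finset.filter_subset _ _ (Finset.mem_coe.1 hy)) h), cnt]
  congr 1
  apply Finset.filter_congr
  intro pt _
  simp only [flipP]
  cases pt.2 <;> cases t <;> simp

lemma count_eq_sum (cond : Finset (ℕ × Bool) → Prop) [DecidablePred cond] :
    ((words n).filter (fun X => cond (occ A B ℓ n X))).card =
      ∑ c ∈ (Uc ℓ n).powerset.filter cond, Wf A B ℓ n c := by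
  rw [Finset.card_eq_sum_card_fiberwise (f := occ A B ℓ n)
    (t := (Uc ℓ n).powerset.filter cond)
    (fun X hX => Finset.mem_filter.2
      ⟨Finset.mem_powerset.2 (occ_subset X), (Finset.mem_filter.1 hX).2⟩)]
  apply Finset.sum_congr rfl
  intro c hc
  rw [Wf]
  congr 1
  rw [Finset.filter_filter]
  apply Finset.filter_congr
  intro X _
  constructor
  · exact fun h => h.2
  · intro h
    exact ⟨by rw [h]; exact (Finset.mem_filter.1 hc).2, h⟩

lemma main_count (hA : A.length = ℓ) (hB : B.length = ℓ)
    (hcor : corSet A A = corSet B B) (hAB : A ≠ B) (hl1 : 0 < ℓ) (hln : ℓ ≤ n) :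
    ((words n).filter (fun X => countOcc B X < countOcc A X)).card =
    ((words n).filter (fun X => countOcc A X < countOcc B X)).card := by
  have hwA : wc A B true = A := by simp [wc]
  have hwB : wc A B false = B := by simp [wc]
  have cA : ∀ X ∈ words n, countOcc A X = cnt true (occ A B ℓ n X) := fun X hX => by
    have := countOcc_eq_cnt hA hB hl1 hln (mem_words.1 hX) true
    rwa [hwA] at this
  have cB : ∀ X ∈ words n, countOcc B X = cnt false (occ A B ℓ n X) := fun X hX => by
    have := countOcc_eq_cnt hA hB hl1 hln (mem_words.1 hX) false
    rwa [hwB] at this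
  have e1 : (words n).filter (fun X => countOcc B X < countOcc A X) =
      (words n).filter (fun X => cnt false (occ A B ℓ n X) < cnt true (occ A B ℓ n X)) :=
    Finset.filter_congr fun X hX => by rw [cA X hX, cB X hX]
  have e2 : (words n).filter (fun X => countOcc A X < countOcc B X) =
      (words n).filter (fun X => cnt true (occ A B ℓ n X) < cnt false (occ A B ℓ n X)) :=
    Finset.filter_congr fun X hX => by rw [cA X hX, cB X hX]
  have hL := count_eq_sum (A := A) (B := B) (ℓ := ℓ) (n := n)
    (fun c => cnt false c < cnt true c)
  have hR := count_eq_sum (A := A) (B := B) (ℓ := ℓ) (n := n)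
    (fun c => cnt true c < cnt false c)
  rw [e1, e2]
  have himg : (Uc ℓ n).powerset.filter (fun c => cnt true c < cnt false c) =
      ((Uc ℓ n).powerset.filter (fun c => cnt false c < cnt true c)).image (flipC ℓ n) := by
    ext c''
    simp only [Finset.mem_image, Finset.mem_filter, Finset.mem_powerset]
    constructor
    · rintro ⟨h1, h2⟩
      refine ⟨flipC ℓ n c'', ⟨flipC_subset_Uc h1, ?_⟩, flipC_flipC h1⟩
      rw [cnt_flip h1, cnt_flip h1]
      simpa using h2
    · rintro ⟨c', ⟨h1, h2⟩, rfl⟩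
      refine ⟨flipC_subset_Uc h1, ?_⟩
      rw [cnt_flip h1, cnt_flip h1]
      simpa using h2
  refine hL.trans (Eq.trans ?_ hR.symm)
  rw [himg, Finset.sum_image (fun x hx y hy h => by
    obtain ⟨hx1, -⟩ := Finset.mem_filter.1 hx
    obtain ⟨hy1, -⟩ := Finset.mem_filter.1 hy
    have := congrArg (flipC ℓ n) h
    rwa [flipC_flipC (Finset.mem_powerset.1 hx1),
         flipC_flipC (Finset.mem_powerset.1 hy1)] at this)]
  apply Finset.sum_congr rfl
  intro c hc
  obtain ⟨h1, -⟩ := Finset.mem_filter.1 hc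
  exact W_flip hA hB hcor hAB hl1 hln ((Uc ℓ n).card) c (Finset.mem_powerset.1 h1)
    (Nat.sub_le _ _)

end LittAux
end Part6

/-- if `Cor(A,A) = Cor(B,B)`, then for every `n` the number of
words of length `n` on which Alice wins (`N_A > N_B`) equals the number on
which Bob wins (`N_B > N_A`). -/
theorem litt_fair_wins (ℓ : ℕ) (A B : List Bool)
    (hA : A.length = ℓ) (hB : B.length = ℓ) (hcor : corSet A A = corSet B B) (n : ℕ) :
    {X : List Bool | X.length = n ∧ countOcc A X > countOcc B X}.ncard =
    {X : List Bool | X.length = n ∧ countOcc B X > countOcc A X}.ncard := by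
  classical
  rcases eq_or_ne A B with rfl | hAB
  · rfl
  · have hl1 : 0 < ℓ := by
      rcases Nat.eq_zero_or_pos ℓ with h | h
      · refine absurd ?_ hAB
        rw [List.eq_nil_of_length_eq_zero (by omega : A.length = 0),
            List.eq_nil_of_length_eq_zero (by omega : B.length = 0)]
      · exact h
    rcases lt_or_ge n ℓ with hn | hln
    · have hz : ∀ C : List Bool, C.length = ℓ → ∀ X : List Bool, X.length = n →
          countOcc C X = 0 := by
        intro C hC X hX
        rw [countOcc, Finset.card_eq_zero, Finset.filter_eq_empty_iff]
        intro i _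
        rw [hC, hX]
        intro h
        omega
      have e1 : {X : List Bool | X.length = n ∧ countOcc A X > countOcc B X} = ∅ := by
        ext X
        simp only [Set.mem_setOf_eq, Set.mem_empty_iff_false, iff_false, not_and]
        intro h1 h2
        rw [hz A hA X h1, hz B hB X h1] at h2
        exact lt_irrefl 0 h2
      have e2 : {X : List Bool | X.length = n ∧ countOcc B X > countOcc A X} = ∅ := by
        ext X
        simp only [Set.mem_setOf_eq, Set.mem_empty_iff_false, iff_false, not_and]
        intro h1 h2
        rw [hz A hA X h1, hz B hB X h1] at h2
        exact lt_irrefl 0 h2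
      rw [e1, e2]
    · have e1 : {X : List Bool | X.length = n ∧ countOcc A X > countOcc B X} =
          ↑((LittAux.words n).filter (fun X => countOcc B X < countOcc A X)) := by
        ext X
        simp only [Set.mem_setOf_eq, Finset.coe_filter, LittAux.mem_words, gt_iff_lt]
      have e2 : {X : List Bool | X.length = n ∧ countOcc B X > countOcc A X} =
          ↑((LittAux.words n).filter (fun X => countOcc A X < countOcc B X)) := by
        ext X
        simp only [Set.mem_setOf_eq, Finset.coe_filter, LittAux.mem_words, gt_iff_lt]
      rw [e1, e2, Set.ncard_coe_finset, Set.ncard_coe_finset]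
      exact LittAux.main_count hA hB hcor hAB hl1 hln
end

section
/- For the degenerate pair A = T H^{ℓ−1} and B = H^{ℓ−1} T (with ℓ ≥ 2), for every word X, the difference N_A(X) − N_B(X) belongs to {−1, 0, 1}. -/
lemma countOcc_cons (A : List Bool) (c : Bool) (X : List Bool) :
    countOcc A (c :: X) =
      (if (c :: X).take A.length = A then 1 else 0) + countOcc A X := by
  unfold countOcc
  rw [Finset.card_filter, Finset.card_filter, List.length_cons, Finset.sum_range_succ']
  have h0 : (if 0 + A.length ≤ X.length + 1 ∧ ((c :: X).drop 0).take A.length = A then 1 else 0)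
      = (if (c :: X).take A.length = A then 1 else 0) := by
    rcases eq_or_ne ((c :: X).take A.length) A with h | h
    · have hl := congrArg List.length h
      simp only [List.length_take, List.length_cons] at hl
      simp only [List.drop_zero, h, if_pos, and_true]
      rw [if_pos (by omega)]
    · simp [h]
  rw [h0, add_comm]
  congr 1
  apply Finset.sum_congr rfl
  intro i _
  have h1 : (i + 1 + A.length ≤ X.length + 1) ↔ (i + A.length ≤ X.length) := by omega
  simp [List.drop_succ_cons, h1]

lemma aux1 {R : List Bool} (hf : false ∈ R) (b : Bool) (n : ℕ) :
    (R ++ [b]).take n = List.replicate n true ↔ R.take n = List.replicate n true := by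
  rcases le_or_gt n R.length with h | h
  · rw [List.take_append_of_le_length h]
  · constructor <;> intro he
    · exfalso
      have hm : false ∈ (R ++ [b]).take n := by
        rw [List.take_append, List.take_of_length_le (le_of_lt h)]
        exact List.mem_append_left _ hf
      rw [he] at hm
      simpa using List.eq_of_mem_replicate hm
    · exfalso
      rw [List.take_of_length_le (le_of_lt h)] at he
      rw [he] at hf
      simpa using List.eq_of_mem_replicate hf

set_option maxHeartbeats 1000000 in
lemma main_lemma (k : ℕ) (X : List Bool) :
    (countOcc (false :: List.replicate (k+1) true) X : ℤ) -
      countOcc (List.replicate (k+1) true ++ [false]) X =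
    (if X.reverse.take (k+1) = List.replicate (k+1) true ∧ false ∈ X then (1:ℤ) else 0) -
    (if X.take (k+1) = List.replicate (k+1) true ∧ false ∈ X then (1:ℤ) else 0) := by
  induction X with
  | nil => simp [countOcc]
  | cons c X ih =>
    rw [countOcc_cons, countOcc_cons]
    simp only [List.length_cons, List.length_append, List.length_replicate,
      List.length_nil, List.take_succ_cons, List.reverse_cons]
    push_cast
    have h43 : List.take (k+1) X = List.replicate (k+1) true →
        List.take k X = List.replicate k true := by
      intro h4
      have h : List.take k X = List.take k (List.take (k+1) X) := by
        rw [List.take_take]; congr 1; omega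
      rw [h, h4, List.take_replicate]
      congr 1; omega
    cases c
    case false =>
      have e2 : (if false :: List.take (k + 1) X =
          List.replicate (k + 1) true ++ [false] then (1:ℤ) else 0) = 0 := by
        rw [if_neg]
        simp [List.replicate_succ]
      have e3 : (if false :: List.take k X = List.replicate (k + 1) true ∧
          false ∈ false :: X then (1:ℤ) else 0) = 0 := by
        rw [if_neg]
        simp [List.replicate_succ]
      erw [e2]
      simp only [List.cons.injEq, true_and, List.mem_cons, true_or, and_true]
      by_cases hf : false ∈ X
      · have he : (List.take (k+1) (X.reverse ++ [false]) = List.replicate (k+1) true) ↔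
            (List.take (k+1) X.reverse = List.replicate (k+1) true) :=
          aux1 (by simpa using hf) false (k+1)
        simp only [hf, and_true] at ih
        simp only [he]
        linarith [ih]
      · obtain ⟨n, rfl⟩ : ∃ n, X = List.replicate n true :=
          ⟨X.length, List.eq_replicate_length.mpr (fun b hb => by
            cases b
            · exact absurd hb hf
            · rfl)⟩
        simp only [hf, and_false, if_false] at ih
        rw [List.reverse_replicate]
        have h1 : List.take (k+1) (List.replicate n true) = List.replicate (k+1) true ↔
            k + 1 ≤ n := by
          rw [List.take_replicate]
          constructor
          · intro h
            have := congrArg List.length h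
            simp at this; omega
          · intro h; congr 1; omega
        have h3 : List.take (k+1) (List.replicate n true ++ [false]) =
            List.replicate (k+1) true ↔ k + 1 ≤ n := by
          constructor
          · intro h
            by_contra hlt
            push_neg at hlt
            have hm : false ∈ List.take (k+1) (List.replicate n true ++ [false]) := by
              rw [List.take_append,
                List.take_of_length_le (by simp; omega)]
              refine List.mem_append_right _ ?_
              rw [List.take_of_length_le (by simp; omega)]
              simp
            rw [h] at hm
            simpa using List.eq_of_mem_replicate hm
          · intro h
            rw [List.take_append_of_le_length (by simp; omega), List.take_replicate]
            congr 1; omega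
        by_cases h : k + 1 ≤ n
        · rw [if_pos (h1.mpr h), if_pos (h3.mpr h)]; linarith [ih]
        · rw [if_neg (fun hh => h (h1.mp hh)), if_neg (fun hh => h (h3.mp hh))]
          linarith [ih]
    case true =>
      have e1 : (if true :: List.take (k+1) X = false :: List.replicate (k + 1) true
          then (1:ℤ) else 0) = 0 := by
        rw [if_neg]; simp
      have e2 : (true :: List.take (k + 1) X =
          List.replicate (k + 1) true ++ [false]) ↔
          (List.take (k+1) X = List.replicate k true ++ [false]) := by
        simp [List.replicate_succ]
      have e3 : (true :: List.take k X = List.replicate (k + 1) true) ↔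
          (List.take k X = List.replicate k true) := by
        simp [List.replicate_succ]
      have e4 : (false ∈ true :: X) ↔ false ∈ X := by simp
      rw [e1]
      simp only [e2, e3, e4]
      have h2f : List.take (k+1) X = List.replicate k true ++ [false] → false ∈ X := by
        intro h2
        refine List.mem_of_mem_take (i := k+1) ?_
        rw [h2]
        exact List.mem_append_right _ (by simp)
      have h23 : List.take (k+1) X = List.replicate k true ++ [false] →
          List.take k X = List.replicate k true := by
        intro h2
        have h : List.take k X = List.take k (List.take (k+1) X) := by
          rw [List.take_take]; congr 1; omega
        rw [h, h2, List.take_append_of_le_length (by simp), List.take_replicate]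
        congr 1; omega
      have h24 : List.take (k+1) X = List.replicate k true ++ [false] →
          ¬ (List.take (k+1) X = List.replicate (k+1) true) := by
        intro h2 h4
        rw [h2] at h4
        have hm : false ∈ List.replicate (k+1) true :=
          h4 ▸ List.mem_append_right _ (by simp)
        simpa using List.eq_of_mem_replicate hm
      by_cases hf : false ∈ X
      · have he : (List.take (k+1) (X.reverse ++ [true]) = List.replicate (k+1) true) ↔
            (List.take (k+1) X.reverse = List.replicate (k+1) true) :=
          aux1 (by simpa using hf) true (k+1)
        simp only [hf, and_true] at ih ⊢
        simp only [he]
        have h34 : ¬ (List.take (k+1) X = List.replicate k true ++ [false]) →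
            List.take k X = List.replicate k true →
            List.take (k+1) X = List.replicate (k+1) true := by
          intro hn h3
          have hlen : k + 1 ≤ X.length := by
            by_contra hlt
            push_neg at hlt
            have hx : List.take k X = X := List.take_of_length_le (by omega)
            rw [hx] at h3
            rw [h3] at hf
            simpa using List.eq_of_mem_replicate hf
          have hk1 : k < X.length := by omega
          have hts : List.take (k+1) X = List.take k X ++ [X[k]] := by
            rw [List.take_succ, List.getElem?_eq_getElem hk1, Option.toList_some]
          cases hb : X[k] with
          | false =>
            exfalso
            apply hn
            rw [hts, h3, hb]
          | true =>
            rw [hts, h3, hb, ← List.replicate_succ']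
        have key : (if List.take k X = List.replicate k true then (1:ℤ) else 0) =
            (if List.take (k+1) X = List.replicate (k+1) true then 1 else 0) +
            (if List.take (k+1) X = List.replicate k true ++ [false] then 1 else 0) := by
          by_cases h2 : List.take (k+1) X = List.replicate k true ++ [false]
          · rw [if_pos (h23 h2), if_pos h2, if_neg (h24 h2)]; ring
          · rw [if_neg h2]
            by_cases h3 : List.take k X = List.replicate k true
            · rw [if_pos h3, if_pos (h34 h2 h3)]; ring
            · rw [if_neg h3, if_neg (fun h4 => h3 (h43 h4))]; ring
        linarith [ih, key]
      · simp only [hf, and_false, if_false] at ih ⊢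
        rw [if_neg (fun h2 => hf (h2f h2))]
        linarith [ih]


/-- for `A = T H^{ℓ-1}` and `B = H^{ℓ-1} T` (with `H = true`,
`T = false`, `ℓ ≥ 2`), `N_A(X) - N_B(X) ∈ {-1, 0, 1}` for every word `X`. -/
theorem degenerate_pair (ℓ : ℕ) (hℓ : 2 ≤ ℓ) (X : List Bool) :
    ((countOcc (false :: List.replicate (ℓ - 1) true) X : ℤ) -
      (countOcc (List.replicate (ℓ - 1) true ++ [false]) X : ℤ)) ∈
      ({-1, 0, 1} : Set ℤ) := by
  obtain ⟨k, hk⟩ : ∃ k, ℓ - 1 = k + 1 := ⟨ℓ - 2, by omega⟩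
  rw [hk, main_lemma k X]
  split_ifs <;> norm_num
end

section
/- Every word Y admits a unique decomposition Y = X_0 E_1 X_1 E_2 ⋯ X_{k−1} E_k X_k where each E_i is an overlap of A and B, no occurrence of A or B in Y meets two different E_i's or any X_i (i.e., N_A(Y) = Σ_i N_A(E_i) and N_B(Y) = Σ_i N_B(E_i)), and each X_i contains no occurrence of A or B. -/
namespace UD


/-- occurrence of `W` in `Y` at position `p`. -/
def occ (W Y : List Bool) (p : ℕ) : Prop :=
  p + W.length ≤ Y.length ∧ (Y.drop p).take W.length = W

instance (W Y p) : Decidable (occ W Y p) := by unfold occ; infer_instance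

lemma countOcc_eq_sum (W X : List Bool) :
    countOcc W X = ∑ i ∈ Finset.range (X.length + 1), if occ W X i then 1 else 0 := by
  unfold countOcc occ
  rw [Finset.card_filter]

lemma countOcc_eq_sum' (W X : List Bool) (hW : W ≠ []) :
    countOcc W X = ∑ i ∈ Finset.range X.length, if occ W X i then 1 else 0 := by
  rw [countOcc_eq_sum, Finset.sum_range_succ]
  have : ¬ occ W X X.length := by
    intro h
    have := h.1
    have : W.length ≥ 1 := List.length_pos_iff.mpr hW
    omega
  simp [this]

lemma countOcc_eq_zero_iff (W X : List Bool) :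
    countOcc W X = 0 ↔ ∀ p, ¬ occ W X p := by
  rw [countOcc_eq_sum]
  rw [Finset.sum_eq_zero_iff]
  constructor
  · intro h p hp
    have hmem : p ∈ Finset.range (X.length + 1) := by
      have := hp.1
      have : p ≤ X.length := by omega
      simp [Finset.mem_range]; omega
    have := h p hmem
    simp [hp] at this
  · intro h i _
    simp [h i]

lemma one_le_countOcc (W X : List Bool) (p : ℕ) (h : occ W X p) : 1 ≤ countOcc W X := by
  by_contra hc
  push_neg at hc
  interval_cases h' : countOcc W X
  exact (countOcc_eq_zero_iff W X).mp h' p h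


lemma occ_append_left_iff (W U V : List Bool) (p : ℕ) (h : p + W.length ≤ U.length) :
    occ W (U ++ V) p ↔ occ W U p := by
  unfold occ
  have h1 : (U ++ V).drop p = U.drop p ++ V := List.drop_append_of_le_length (by omega)
  have h2 : ((U ++ V).drop p).take W.length = (U.drop p).take W.length := by
    rw [h1, List.take_append_of_le_length (by simp; omega)]
  rw [h2]
  simp only [List.length_append]
  constructor
  · rintro ⟨-, h2⟩; exact ⟨h, h2⟩
  · rintro ⟨h1, h2⟩; exact ⟨by omega, h2⟩

lemma occ_append_left (W U V : List Bool) (p : ℕ) (h : occ W U p) : occ W (U ++ V) p :=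
  (occ_append_left_iff W U V p h.1).mpr h

lemma occ_append_right_iff (W U V : List Bool) (p : ℕ) :
    occ W (U ++ V) (U.length + p) ↔ occ W V p := by
  unfold occ
  rw [List.drop_append, List.drop_eq_nil_of_le (by omega : U.length ≤ U.length + p), List.nil_append,
    Nat.add_sub_cancel_left]
  simp only [List.length_append]
  constructor
  · rintro ⟨h1, h2⟩; exact ⟨by omega, h2⟩
  · rintro ⟨h1, h2⟩; exact ⟨by omega, h2⟩

lemma occ_cons_succ (W Z : List Bool) (b : Bool) (p : ℕ) :
    occ W (b :: Z) (p + 1) ↔ occ W Z p := by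
  unfold occ
  simp only [List.length_cons, List.drop_succ_cons]
  constructor
  · rintro ⟨h1, h2⟩; exact ⟨by omega, h2⟩
  · rintro ⟨h1, h2⟩; exact ⟨by omega, h2⟩


lemma countOcc_cons (W X : List Bool) (b : Bool) (hW : W ≠ []) :
    countOcc W (b :: X) = (if occ W (b :: X) 0 then 1 else 0) + countOcc W X := by
  rw [countOcc_eq_sum' W _ hW, countOcc_eq_sum' W X hW]
  simp only [List.length_cons]
  rw [Finset.sum_range_succ' (fun i => if occ W (b :: X) i then 1 else 0) X.length]
  have : ∀ i, (if occ W (b :: X) (i + 1) then 1 else 0) = (if occ W X i then 1 else 0) := by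
    intro i; simp [occ_cons_succ]
  simp only [this]
  omega

lemma countOcc_append (W U V : List Bool) (hW : W ≠ []) :
    countOcc W (U ++ V) =
      (∑ p ∈ Finset.range U.length, if occ W (U ++ V) p then 1 else 0) + countOcc W V := by
  induction U with
  | nil => simp
  | cons b U' ih =>
    have hcons : (b :: U') ++ V = b :: (U' ++ V) := rfl
    rw [hcons, countOcc_cons W (U' ++ V) b hW, ih]
    simp only [List.length_cons]
    rw [Finset.sum_range_succ' (fun p => if occ W (b :: (U' ++ V)) p then 1 else 0) U'.length]
    have : ∀ i, (if occ W (b :: (U' ++ V)) (i + 1) then 1 else 0)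
        = (if occ W (U' ++ V) i then 1 else 0) := by
      intro i; simp [occ_cons_succ]
    simp only [this]
    omega

lemma countOcc_append_le (W U V : List Bool) (hW : W ≠ []) :
    countOcc W U + countOcc W V ≤ countOcc W (U ++ V) := by
  rw [countOcc_append W U V hW, countOcc_eq_sum' W U hW]
  have : ∀ p ∈ Finset.range U.length,
      (if occ W U p then 1 else 0) ≤ (if occ W (U ++ V) p then 1 else 0) := by
    intro p _
    split_ifs with h1 h2
    · omega
    · exact absurd (occ_append_left W U V p h1) h2
    · omega
    · omega
  have h2 := Finset.sum_le_sum this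
  omega

lemma no_cross_of_le (W U V : List Bool) (hW : W ≠ [])
    (hle : countOcc W (U ++ V) ≤ countOcc W U + countOcc W V) :
    ∀ p, p < U.length → occ W (U ++ V) p → occ W U p := by
  intro p hp hocc
  by_contra hno
  have hterm : ∀ q ∈ Finset.range U.length,
      (if occ W U q then 1 else 0) ≤ (if occ W (U ++ V) q then (1:ℕ) else 0) := by
    intro q _
    split_ifs with h1 h2
    · omega
    · exact absurd (occ_append_left W U V q h1) h2
    · omega
    · omega
  have hstrict : (∑ q ∈ Finset.range U.length, if occ W U q then 1 else 0)
      < ∑ q ∈ Finset.range U.length, if occ W (U ++ V) q then (1:ℕ) else 0 := by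
    apply Finset.sum_lt_sum hterm
    exact ⟨p, Finset.mem_range.mpr hp, by simp [hocc, hno]⟩
  rw [countOcc_append W U V hW] at hle
  rw [countOcc_eq_sum' W U hW] at hle
  omega

lemma countOcc_split (W U V : List Bool) (hW : W ≠ [])
    (h : ∀ p, occ W (U ++ V) p → p + W.length ≤ U.length ∨ U.length ≤ p) :
    countOcc W (U ++ V) = countOcc W U + countOcc W V := by
  rw [countOcc_append W U V hW, countOcc_eq_sum' W U hW]
  congr 1
  apply Finset.sum_congr rfl
  intro p hp
  rw [Finset.mem_range] at hp
  congr 1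
  apply propext
  constructor
  · intro hocc
    rcases h p hocc with h1 | h1
    · exact (occ_append_left_iff W U V p h1).mp hocc
    · omega
  · exact occ_append_left W U V p

lemma sum_counts_le (W : List Bool) (hW : W ≠ []) :
    ∀ (Es Xs : List (List Bool)), Xs.length = Es.length + 1 →
      (Es.map (countOcc W)).sum ≤ countOcc W (interleave Xs Es) := by
  intro Es
  induction Es with
  | nil => simp
  | cons E Es ih =>
    intro Xs h
    match Xs with
    | X :: Xs' =>
      have hlen : Xs'.length = Es.length + 1 := by simpa using h
      have h1 := ih Xs' hlen
      have h2 := countOcc_append_le W E (interleave Xs' Es) hW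
      have h3 := countOcc_append_le W X (E ++ interleave Xs' Es) hW
      have hi : interleave (X :: Xs') (E :: Es) = X ++ (E ++ interleave Xs' Es) := by
        show X ++ E ++ interleave Xs' Es = _
        rw [List.append_assoc]
      rw [hi]
      simp only [List.map_cons, List.sum_cons]
      omega

lemma chainValid_cons (C : List Bool) (Cs : List (List Bool)) (m : ℕ) (ms : List ℕ) :
    chainValid (C :: Cs) (m :: ms) ↔
      m ∈ corSet C (Cs.getD 0 []) ∧ chainValid Cs ms := by
  unfold chainValid
  constructor
  · intro h
    refine ⟨by simpa using h 0 (by simp), fun i hi => ?_⟩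
    have := h (i + 1) (by simp; omega)
    simpa using this
  · rintro ⟨h0, h⟩ i hi
    match i with
    | 0 => simpa using h0
    | Nat.succ j =>
      have := h j (by simp at hi; omega)
      simpa using this

lemma chainWord_head (Cs : List (List Bool)) (ms : List ℕ) (C : List Bool) :
    ∃ Z, chainWord (C :: Cs) ms = C ++ Z := by
  match Cs, ms with
  | [], ms => exact ⟨[], by simp [chainWord]⟩
  | C' :: Cs', [] => exact ⟨[], by simp [chainWord]⟩
  | C' :: Cs', m :: ms' => exact ⟨(chainWord (C' :: Cs') ms').drop m, rfl⟩

lemma corSet_spec {C C' : List Bool} {m : ℕ} (h : m ∈ corSet C C') :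
    1 ≤ m ∧ m ≤ C.length - 1 ∧ C.drop (C.length - m) = C'.take m := by
  unfold corSet at h
  rw [Finset.mem_filter, Finset.mem_Icc] at h
  exact ⟨h.1.1, h.1.2, h.2⟩

lemma chainWord_cons_eq {L : ℕ} (C C' : List Bool) (Cs : List (List Bool)) (m : ℕ)
    (ms : List ℕ) (hC : C.length = L) (hC' : C'.length = L) (hm : m ∈ corSet C C') :
    chainWord (C :: C' :: Cs) (m :: ms) =
      C.take (L - m) ++ chainWord (C' :: Cs) ms := by
  obtain ⟨hm1, hm2, hm3⟩ := corSet_spec hm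
  obtain ⟨Z, hZ⟩ := chainWord_head Cs ms C'
  have hmL : m ≤ L := by omega
  have hW'take : (chainWord (C' :: Cs) ms).take m = C'.take m := by
    rw [hZ, List.take_append_of_le_length (by omega)]
  show C ++ (chainWord (C' :: Cs) ms).drop m = _
  conv_lhs => rw [← List.take_append_drop (L - m) C]
  rw [List.append_assoc]
  congr 1
  have : C.drop (L - m) = C'.take m := by rw [← hC]; exact hm3
  rw [this, ← hW'take, List.take_append_drop]

lemma overlap_head {A B E : List Bool} (h : isOverlap A B E) :
    ∃ C, (C = A ∨ C = B) ∧ E.take C.length = C ∧ C.length ≤ E.length := by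
  obtain ⟨Cs, ms, hne, hlen, hmem, hval, hE⟩ := h
  match Cs with
  | C :: Cs' =>
    obtain ⟨Z, hZ⟩ := chainWord_head Cs' ms C
    refine ⟨C, hmem C (by simp), ?_, ?_⟩
    · rw [hE, hZ, List.take_left]
    · rw [hE, hZ]; simp

lemma overlap_cross (A B : List Bool) (hlen : B.length = A.length) (hA : A ≠ []) :
    ∀ (Cs : List (List Bool)) (ms : List ℕ), Cs ≠ [] → Cs.length = ms.length + 1 →
      (∀ C ∈ Cs, C = A ∨ C = B) → chainValid Cs ms →
      ∀ c, 0 < c → c < (chainWord Cs ms).length →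
        ∃ q, q < c ∧ c < q + A.length ∧
          (occ A (chainWord Cs ms) q ∨ occ B (chainWord Cs ms) q) := by
  intro Cs
  induction Cs with
  | nil => intro ms h; exact absurd rfl h
  | cons C rest ih =>
    intro ms _ hlens hmem hval c hc0 hcW
    obtain ⟨L, hL⟩ : ∃ L, L = A.length := ⟨_, rfl⟩
    rw [← hL] at hlen ⊢
    have hCL : C.length = L := by
      rcases hmem C (by simp) with h | h <;> rw [h] <;> omega
    match rest, ms with
    | [], ms =>
      have hW : chainWord [C] ms = C := by simp [chainWord]
      rw [hW] at hcW ⊢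
      refine ⟨0, hc0, by omega, ?_⟩
      rcases hmem C (by simp) with h | h
      · left; subst h; exact ⟨by omega, by simp⟩
      · right; subst h; exact ⟨by omega, by simp⟩
    | C' :: rest', m :: ms' =>
      have hC'L : C'.length = L := by
        rcases hmem C' (by simp) with h | h <;> rw [h] <;> omega
      rw [chainValid_cons] at hval
      obtain ⟨hm, hval'⟩ := hval
      simp only [List.getD_cons_zero] at hm
      obtain ⟨hm1, hm2, hm3⟩ := corSet_spec hm
      rw [hCL] at hm2
      have heq := chainWord_cons_eq C C' rest' m ms' hCL hC'L hm
      obtain ⟨W', hW'⟩ : ∃ W', W' = chainWord (C' :: rest') ms' := ⟨_, rfl⟩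
      rw [← hW'] at heq
      have hW'len : L ≤ W'.length := by
        obtain ⟨Z, hZ⟩ := chainWord_head rest' ms' C'
        rw [← hW'] at hZ
        rw [hZ]; simp; omega
      have htklen : (C.take (L - m)).length = L - m := by
        rw [List.length_take]; omega
      have hWlen : (chainWord (C :: C' :: rest') (m :: ms')).length = (L - m) + W'.length := by
        rw [heq]; simp [htklen]
      by_cases hcL : c < L
      · refine ⟨0, hc0, by omega, ?_⟩
        have htk : (chainWord (C :: C' :: rest') (m :: ms')).take C.length = C := by
          have hdef : chainWord (C :: C' :: rest') (m :: ms') = C ++ W'.drop m := by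
            rw [hW']; rfl
          rw [hdef]; exact List.take_left
        rcases hmem C (by simp) with h | h
        · left
          constructor
          · rw [hWlen]; omega
          · simp only [List.drop_zero]; rw [← h]; exact htk
        · right
          constructor
          · rw [hWlen]; omega
          · simp only [List.drop_zero]; rw [← h]; exact htk
      · push_neg at hcL
        have hstep := ih ms' (by simp) (by simpa using hlens) (fun D hD => hmem D (by simp [hD]))
          hval' (c - (L - m)) (by omega) (by rw [hWlen] at hcW; rw [← hW']; omega)
        obtain ⟨q', hq1, hq2, hq3⟩ := hstep
        rw [← hW'] at hq3
        refine ⟨(L - m) + q', by omega, by omega, ?_⟩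
        rw [heq]
        rcases hq3 with h | h
        · left
          have := (occ_append_right_iff A (C.take (L - m)) W' q').mpr h
          rwa [htklen] at this
        · right
          have := (occ_append_right_iff B (C.take (L - m)) W' q').mpr h
          rwa [htklen] at this

lemma overlap_single (A B Y : List Bool) (hlen : B.length = A.length) (p : ℕ)
    (hocc : occ A Y p ∨ occ B Y p) :
    isOverlap A B ((Y.drop p).take A.length) := by
  rcases hocc with h | h
  · exact ⟨[A], [], by simp, by simp, by simp, fun i hi => by simp at hi,
      by simp [chainWord, h.2]⟩
  · refine ⟨[B], [], by simp, by simp, by simp, fun i hi => by simp at hi, ?_⟩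
    have : (Y.drop p).take A.length = B := by rw [← hlen]; exact h.2
    simp [chainWord, this]

lemma chain_exists (A B : List Bool) (hlen : B.length = A.length) (hA : A ≠ []) :
    ∀ (n : ℕ) (Y : List Bool) (p c : ℕ),
      c - p ≤ n + A.length →
      (occ A Y p ∨ occ B Y p) →
      p + A.length ≤ c → c ≤ Y.length →
      (∀ r, (occ A Y r ∨ occ B Y r) → p ≤ r → r + A.length ≤ c ∨ c ≤ r) →
      (∀ d, p < d → d < c → ∃ r, (occ A Y r ∨ occ B Y r) ∧ r < d ∧ d < r + A.length) →
      isOverlap A B ((Y.drop p).take (c - p)) := by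
  intro n
  induction n with
  | zero =>
    intro Y p c hfuel hocc hpc hcY hsep hdense
    have : c - p = A.length := by omega
    rw [this]
    exact overlap_single A B Y hlen p hocc
  | succ n ih =>
    intro Y p c hfuel hocc hpc hcY hsep hdense
    obtain ⟨L, hL⟩ : ∃ L, L = A.length := ⟨_, rfl⟩
    have hL1 : 1 ≤ L := by rw [hL]; exact List.length_pos_iff.mpr hA
    by_cases hc : c = p + A.length
    · have : c - p = A.length := by omega
      rw [this]
      exact overlap_single A B Y hlen p hocc
    · have hpLc : p + L < c := by rw [hL]; omega
      obtain ⟨p₂, hocc₂, hp₂lt, hp₂gt⟩ := hdense (p + L) (by omega) (by omega)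
      rw [← hL] at hp₂gt
      have hp₂p : p < p₂ := by omega
      have hp₂c : p₂ + A.length ≤ c := by
        rcases hsep p₂ hocc₂ (by omega) with h | h
        · exact h
        · omega
      have hE₂ := ih Y p₂ c (by omega) hocc₂ hp₂c hcY
        (fun r hr hpr => hsep r hr (by omega))
        (fun d hd1 hd2 => hdense d (by omega) hd2)
      obtain ⟨Cs₂, ms₂, hne₂, hlen₂, hmem₂, hval₂, hEeq₂⟩ := hE₂
      match Cs₂, hne₂ with
      | C₂ :: rest, _ =>
      have hC₂AB : C₂ = A ∨ C₂ = B := hmem₂ C₂ (by simp)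
      have hC₂L : C₂.length = L := by
        rcases hC₂AB with h | h <;> rw [h] <;> omega
      obtain ⟨Z, hZ⟩ := chainWord_head rest ms₂ C₂
      have hE₂len : L ≤ c - p₂ := by rw [hL]; omega
      have hC₂seg : C₂ = (Y.drop p₂).take L := by
        have h1 : ((Y.drop p₂).take (c - p₂)).take C₂.length = C₂ := by
          rw [hEeq₂, hZ, List.take_left]
        rw [← h1, List.take_take, hC₂L]
        congr 1
        omega
      obtain ⟨C, hCdef⟩ : ∃ C, C = (Y.drop p).take L := ⟨_, rfl⟩
      have hCAB : C = A ∨ C = B := by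
        rcases hocc with h | h
        · left; rw [hCdef, hL]; exact h.2
        · right; rw [hCdef, hL, ← hlen]; exact h.2
      have hCL : C.length = L := by
        rcases hCAB with h | h <;> rw [h] <;> omega
      obtain ⟨m, hmdef⟩ : ∃ m, m = p + L - p₂ := ⟨_, rfl⟩
      have hm : m ∈ corSet C C₂ := by
        unfold corSet
        rw [Finset.mem_filter, Finset.mem_Icc]
        refine ⟨⟨by omega, by omega⟩, ?_⟩
        have hCm : C.length - m = p₂ - p := by omega
        rw [hCm, hCdef, List.drop_take, List.drop_drop]
        have h1 : p + (p₂ - p) = p₂ := by omega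
        have h2 : L - (p₂ - p) = m := by omega
        rw [h1, h2, hC₂seg, List.take_take]
        congr 1
        omega
      have hsplit : (Y.drop p).take (c - p) =
          C ++ ((Y.drop p₂).take (c - p₂)).drop m := by
        have e2 : ((Y.drop p₂).take (c - p₂)).drop m = (Y.drop (p + L)).take (c - p - L) := by
          rw [List.drop_take, List.drop_drop]
          rw [show p₂ + m = p + L by omega, show c - p₂ - m = c - p - L by omega]
        rw [e2, hCdef]
        rw [show c - p = L + (c - p - L) by omega, List.take_add, List.drop_drop,
          Nat.add_sub_cancel_left]
      refine ⟨C :: C₂ :: rest, m :: ms₂, by simp, by simpa using hlen₂, ?_, ?_, ?_⟩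
      · intro D hD
        rcases List.mem_cons.mp hD with h | h
        · rw [h]; exact hCAB
        · exact hmem₂ D h
      · rw [chainValid_cons]
        exact ⟨by simpa using hm, hval₂⟩
      · show (Y.drop p).take (c - p) = C ++ (chainWord (C₂ :: rest) ms₂).drop m
        rw [hsplit, hEeq₂]

lemma occ_take_iff (W Y : List Bool) (c p : ℕ) (hc : c ≤ Y.length) (h : p + W.length ≤ c) :
    occ W (Y.take c) p ↔ occ W Y p := by
  have h1 : Y.take c ++ Y.drop c = Y := List.take_append_drop c Y
  have h2 : (Y.take c).length = c := by rw [List.length_take]; omega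
  constructor
  · intro hh
    rw [← h1]
    exact occ_append_left _ _ _ _ hh
  · intro hh
    exact (occ_append_left_iff W (Y.take c) (Y.drop c) p (by omega)).mp
      (by rw [h1]; exact hh)

lemma decomp_nil (A B Y : List Bool) (hnoA : countOcc A Y = 0) (hnoB : countOcc B Y = 0) :
    isDecomp A B Y [Y] [] := by
  refine ⟨by simp, rfl, by simp, ?_, by simp [hnoA], by simp [hnoB]⟩
  intro X hX
  simp at hX
  subst hX
  exact ⟨hnoA, hnoB⟩

lemma exists_decomp (A B : List Bool) (hlen : B.length = A.length) (hA : A ≠ []) :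
    ∀ (n : ℕ) (Y : List Bool), Y.length ≤ n → ∃ Xs Es, isDecomp A B Y Xs Es := by
  have hA1 : 1 ≤ A.length := List.length_pos_iff.mpr hA
  intro n
  induction n with
  | zero =>
    intro Y hY
    have hYnil : Y = [] := List.length_eq_zero_iff.mp (by omega)
    subst hYnil
    refine ⟨[[]], [], decomp_nil A B [] ?_ ?_⟩
    · rw [countOcc_eq_zero_iff]; intro p hp; have := hp.1
      simp only [List.length_nil] at this; omega
    · rw [countOcc_eq_zero_iff]; intro p hp; have := hp.1
      simp only [List.length_nil] at this
      have hB1 : 1 ≤ B.length := by omega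
      omega
  | succ n ih =>
    intro Y hY
    classical
    by_cases hocc : ∃ p, occ A Y p ∨ occ B Y p
    · have hp : occ A Y (Nat.find hocc) ∨ occ B Y (Nat.find hocc) := Nat.find_spec hocc
      have hpmin : ∀ q, q < Nat.find hocc → ¬(occ A Y q ∨ occ B Y q) :=
        fun q hq => Nat.find_min hocc hq
      obtain ⟨p, hpdef⟩ : ∃ p, p = Nat.find hocc := ⟨_, rfl⟩
      rw [← hpdef] at hp hpmin
      have hpY : p + A.length ≤ Y.length := by
        rcases hp with h | h
        · exact h.1
        · have := h.1; omega
      have hcut : ∃ c, p < c ∧ c ≤ Y.length ∧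
          ∀ r, (occ A Y r ∨ occ B Y r) → r + A.length ≤ c ∨ c ≤ r := by
        refine ⟨Y.length, by omega, le_refl _, ?_⟩
        intro r hr
        left
        rcases hr with h | h
        · exact h.1
        · have := h.1; omega
      have hc1 : p < Nat.find hcut := (Nat.find_spec hcut).1
      have hc2 : Nat.find hcut ≤ Y.length := (Nat.find_spec hcut).2.1
      have hc3 : ∀ r, (occ A Y r ∨ occ B Y r) → r + A.length ≤ Nat.find hcut ∨ Nat.find hcut ≤ r :=
        (Nat.find_spec hcut).2.2
      have hcmin : ∀ d, d < Nat.find hcut → ¬(p < d ∧ d ≤ Y.length ∧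
          ∀ r, (occ A Y r ∨ occ B Y r) → r + A.length ≤ d ∨ d ≤ r) :=
        fun d hd => Nat.find_min hcut hd
      obtain ⟨c, hcdef⟩ : ∃ c, c = Nat.find hcut := ⟨_, rfl⟩
      rw [← hcdef] at hc1 hc2 hc3 hcmin
      have hdense : ∀ d, p < d → d < c →
          ∃ r, (occ A Y r ∨ occ B Y r) ∧ r < d ∧ d < r + A.length := by
        intro d hd1 hd2
        have hnot := hcmin d hd2
        push_neg at hnot
        obtain ⟨r, hr1, hr2⟩ := hnot hd1 (by omega)
        exact ⟨r, hr1, by omega, by omega⟩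
      have hpc : p + A.length ≤ c := by
        rcases hc3 p hp with h | h
        · exact h
        · omega
      have hov : isOverlap A B ((Y.drop p).take (c - p)) :=
        chain_exists A B hlen hA c Y p c (by omega) hp hpc hc2
          (fun r hr _ => hc3 r hr) hdense
      obtain ⟨Xs', Es', hd'⟩ := ih (Y.drop c) (by rw [List.length_drop]; omega)
      obtain ⟨hd1, hd2, hd3, hd4, hd5, hd6⟩ := hd'
      have htkp : (Y.take p).length = p := by rw [List.length_take]; omega
      have htkc : (Y.take c).length = c := by rw [List.length_take]; omega
      -- no occurrences before p
      have hXA : countOcc A (Y.take p) = 0 := by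
        rw [countOcc_eq_zero_iff]
        intro q hq
        have hq2 : q + A.length ≤ p := by have := hq.1; omega
        have := (occ_take_iff A Y p q (by omega) hq2).mp hq
        exact hpmin q (by omega) (Or.inl this)
      have hXB : countOcc B (Y.take p) = 0 := by
        rw [countOcc_eq_zero_iff]
        intro q hq
        have hq2 : q + B.length ≤ p := by have := hq.1; omega
        have := (occ_take_iff B Y p q (by omega) hq2).mp hq
        exact hpmin q (by omega) (Or.inr this)
      -- splitting identities
      have hsplitY : ∀ W : List Bool, W ≠ [] → (∀ r, occ W Y r → occ A Y r ∨ occ B Y r) →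
          W.length = A.length →
          countOcc W Y = countOcc W (Y.take c) + countOcc W (Y.drop c) := by
        intro W hW htr hWL
        have h := countOcc_split W (Y.take c) (Y.drop c) hW ?_
        · rwa [List.take_append_drop] at h
        · intro q hq
          rw [List.take_append_drop] at hq
          rw [htkc]
          rcases hc3 q (htr q hq) with h | h
          · left; omega
          · right; omega
      have hsplitTk : ∀ W : List Bool, W ≠ [] → (∀ r, occ W Y r → occ A Y r ∨ occ B Y r) →
          W.length = A.length →
          countOcc W (Y.take c) = countOcc W (Y.take p) + countOcc W ((Y.drop p).take (c - p)) := by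
        intro W hW htr hWL
        have hTc : Y.take c = Y.take p ++ (Y.drop p).take (c - p) := by
          rw [← List.take_append_drop p (Y.take c), List.take_take,
            min_eq_left (le_of_lt hc1), List.drop_take]
        rw [hTc]
        apply countOcc_split W _ _ hW
        intro q hq
        rw [← hTc] at hq
        right
        rw [htkp]
        have hqY : occ W Y q := (occ_take_iff W Y c q hc2 (by have := hq.1; omega)).mp hq
        by_contra hlt
        push_neg at hlt
        exact hpmin q hlt (htr q hqY)
      refine ⟨Y.take p :: Xs', (Y.drop p).take (c - p) :: Es', ?_, ?_, ?_, ?_, ?_, ?_⟩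
      · simpa using hd1
      · show Y = Y.take p ++ (Y.drop p).take (c - p) ++ interleave Xs' Es'
        rw [← hd2, List.append_assoc]
        have hdc : Y.drop c = (Y.drop p).drop (c - p) := by
          rw [List.drop_drop]
          congr 1
          omega
        rw [hdc, List.take_append_drop, List.take_append_drop]
      · intro E hE
        rcases List.mem_cons.mp hE with h | h
        · rw [h]; exact hov
        · exact hd3 E h
      · intro X hX
        rcases List.mem_cons.mp hX with h | h
        · rw [h]; exact ⟨hXA, hXB⟩
        · exact hd4 X h
      · have e1 := hsplitY A hA (fun r hr => Or.inl hr) rfl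
        have e2 := hsplitTk A hA (fun r hr => Or.inl hr) rfl
        simp only [List.map_cons, List.sum_cons]
        rw [← hd5]
        omega
      · have hB : B ≠ [] := by intro h; rw [h] at hlen; simp at hlen; omega
        have e1 := hsplitY B hB (fun r hr => Or.inr hr) hlen
        have e2 := hsplitTk B hB (fun r hr => Or.inr hr) hlen
        simp only [List.map_cons, List.sum_cons]
        rw [← hd6]
        omega
    · push_neg at hocc
      refine ⟨[Y], [], decomp_nil A B Y ?_ ?_⟩
      · rw [countOcc_eq_zero_iff]
        intro q hq
        exact (hocc q).1 hq
      · rw [countOcc_eq_zero_iff]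
        intro q hq
        exact (hocc q).2 hq

lemma decomp_facts (A B : List Bool) (hlen : B.length = A.length) (hA : A ≠ [])
    (Y X0 E : List Bool) (Xs₂ Es₂ : List (List Bool))
    (hd : isDecomp A B Y (X0 :: Xs₂) (E :: Es₂)) :
    A.length ≤ E.length ∧
    (∀ r, (occ A Y r ∨ occ B Y r) → X0.length ≤ r) ∧
    (occ A Y X0.length ∨ occ B Y X0.length) ∧
    (∀ r, (occ A Y r ∨ occ B Y r) →
      r + A.length ≤ X0.length + E.length ∨ X0.length + E.length ≤ r) ∧
    (∀ c, X0.length < c → c < X0.length + E.length →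
      ∃ r, (occ A Y r ∨ occ B Y r) ∧ r < c ∧ c < r + A.length) ∧
    Y.take X0.length = X0 ∧ (Y.drop X0.length).take E.length = E ∧
    isDecomp A B (Y.drop (X0.length + E.length)) Xs₂ Es₂ := by
  obtain ⟨hlens, hYeq, hov, hgap, hcA, hcB⟩ := hd
  have hB : B ≠ [] := by
    intro h
    rw [h] at hlen
    simp at hlen
    exact hA (List.length_eq_zero_iff.mp hlen.symm)
  have hlens' : Xs₂.length = Es₂.length + 1 := by simpa using hlens
  obtain ⟨R, hR⟩ : ∃ R, R = interleave Xs₂ Es₂ := ⟨_, rfl⟩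
  have hY : Y = X0 ++ (E ++ R) := by
    rw [hR]
    rw [← List.append_assoc]
    exact hYeq
  have hEov : isOverlap A B E := hov E (by simp)
  obtain ⟨C, hCAB, hCtk, hCle⟩ := overlap_head hEov
  have hCL : C.length = A.length := by rcases hCAB with h | h <;> rw [h] <;> omega
  have hE1 : A.length ≤ E.length := by omega
  have hX0A : countOcc A X0 = 0 := (hgap X0 (by simp)).1
  have hX0B : countOcc B X0 = 0 := (hgap X0 (by simp)).2
  -- counting equalities, for W ∈ {A, B}
  have key : ∀ W : List Bool, W ≠ [] →
      countOcc W Y = countOcc W E + (Es₂.map (countOcc W)).sum →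
      countOcc W X0 = 0 →
      (countOcc W Y ≤ countOcc W X0 + countOcc W (E ++ R) ∧
       countOcc W Y ≤ countOcc W (X0 ++ E) + countOcc W R) := by
    intro W hW hc hX0
    have i1 : countOcc W E + countOcc W R ≤ countOcc W (E ++ R) :=
      countOcc_append_le W E R hW
    have i2 : countOcc W X0 + countOcc W E ≤ countOcc W (X0 ++ E) :=
      countOcc_append_le W X0 E hW
    have i3 : (Es₂.map (countOcc W)).sum ≤ countOcc W R := by
      rw [hR]; exact sum_counts_le W hW Es₂ Xs₂ hlens'
    have i4 : countOcc W (X0 ++ E) + countOcc W R ≤ countOcc W Y := by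
      rw [hY, ← List.append_assoc]
      exact countOcc_append_le W (X0 ++ E) R hW
    constructor
    · omega
    · omega
  have keyA := key A hA (by simpa using hcA) hX0A
  have keyB := key B hB (by simpa using hcB) hX0B
  have htX0 : (X0 ++ E).length = X0.length + E.length := by simp
  -- (f1)
  have f1 : ∀ r, (occ A Y r ∨ occ B Y r) → X0.length ≤ r := by
    intro r hr
    by_contra hlt
    push_neg at hlt
    rcases hr with h | h
    · have := no_cross_of_le A X0 (E ++ R) hA (by rw [← hY]; exact keyA.1) r hlt
        (by rw [← hY]; exact h)
      have := one_le_countOcc A X0 r this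
      omega
    · have := no_cross_of_le B X0 (E ++ R) hB (by rw [← hY]; exact keyB.1) r hlt
        (by rw [← hY]; exact h)
      have := one_le_countOcc B X0 r this
      omega
  -- (f2)
  have f2 : occ A Y X0.length ∨ occ B Y X0.length := by
    have hoccE : occ C (E ++ R) 0 := by
      refine ⟨by simp; omega, ?_⟩
      simp only [List.drop_zero]
      rw [List.take_append_of_le_length hCle]
      exact hCtk
    have := (occ_append_right_iff C X0 (E ++ R) 0).mpr hoccE
    rw [← hY] at this
    simp only [Nat.add_zero] at this
    rcases hCAB with h | h
    · left; rw [← h]; exact this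
    · right; rw [← h]; exact this
  -- (f3)
  have f3 : ∀ r, (occ A Y r ∨ occ B Y r) →
      r + A.length ≤ X0.length + E.length ∨ X0.length + E.length ≤ r := by
    intro r hr
    by_cases hre : X0.length + E.length ≤ r
    · right; exact hre
    · left
      push_neg at hre
      rcases hr with h | h
      · have := no_cross_of_le A (X0 ++ E) R hA
          (by rw [List.append_assoc, ← hY]; exact keyA.2) r (by rw [htX0]; omega)
          (by rw [List.append_assoc, ← hY]; exact h)
        have := this.1
        omega
      · have := no_cross_of_le B (X0 ++ E) R hB
          (by rw [List.append_assoc, ← hY]; exact keyB.2) r (by rw [htX0]; omega)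
          (by rw [List.append_assoc, ← hY]; exact h)
        have := this.1
        omega
  -- (f4)
  have f4 : ∀ c, X0.length < c → c < X0.length + E.length →
      ∃ r, (occ A Y r ∨ occ B Y r) ∧ r < c ∧ c < r + A.length := by
    intro c hc1 hc2
    obtain ⟨Cs, ms, hne, hlenC, hmem, hval, hEeq⟩ := hEov
    have := overlap_cross A B hlen hA Cs ms hne hlenC hmem hval (c - X0.length)
      (by omega) (by rw [← hEeq]; omega)
    obtain ⟨q, hq1, hq2, hq3⟩ := this
    rw [← hEeq] at hq3
    refine ⟨X0.length + q, ?_, by omega, by omega⟩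
    rcases hq3 with h | h
    · left
      have h2 := occ_append_left A E R q h
      have h3 := (occ_append_right_iff A X0 (E ++ R) q).mpr h2
      rw [← hY] at h3
      exact h3
    · right
      have h2 := occ_append_left B E R q h
      have h3 := (occ_append_right_iff B X0 (E ++ R) q).mpr h2
      rw [← hY] at h3
      exact h3
  -- (f5)
  have hdropR : Y.drop (X0.length + E.length) = R := by
    rw [hY, ← List.append_assoc, ← htX0, List.drop_left]
  have g1 : Y.take X0.length = X0 := by rw [hY, List.take_left]
  have g2 : (Y.drop X0.length).take E.length = E := by
    rw [hY, List.drop_left, List.take_left]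
  refine ⟨hE1, f1, f2, f3, f4, g1, g2, ?_⟩
  have eqR : ∀ W : List Bool, W ≠ [] →
      countOcc W Y = countOcc W E + (Es₂.map (countOcc W)).sum →
      countOcc W X0 = 0 →
      countOcc W R = (Es₂.map (countOcc W)).sum := by
    intro W hW hc hX0
    have i1 : countOcc W E + countOcc W R ≤ countOcc W (E ++ R) :=
      countOcc_append_le W E R hW
    have i2 : countOcc W X0 + countOcc W E ≤ countOcc W (X0 ++ E) :=
      countOcc_append_le W X0 E hW
    have i3 : (Es₂.map (countOcc W)).sum ≤ countOcc W R := by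
      rw [hR]; exact sum_counts_le W hW Es₂ Xs₂ hlens'
    have i4 : countOcc W (X0 ++ E) + countOcc W R ≤ countOcc W Y := by
      rw [hY, ← List.append_assoc]
      exact countOcc_append_le W (X0 ++ E) R hW
    omega
  refine ⟨hlens', by rw [hdropR, hR], fun E' hE' => hov E' (by simp [hE']),
    fun X hX => hgap X (by simp [hX]), ?_, ?_⟩
  · rw [hdropR]
    exact eqR A hA (by simpa using hcA) hX0A
  · rw [hdropR]
    have hB' : B ≠ [] := hB
    exact eqR B hB' (by simpa using hcB) hX0B

lemma decomp_of_no_occ (A B : List Bool) (hlen : B.length = A.length) (hA : A ≠ [])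
    (Y : List Bool) (Xs Es : List (List Bool)) (hd : isDecomp A B Y Xs Es)
    (h0A : countOcc A Y = 0) (h0B : countOcc B Y = 0) : Xs = [Y] ∧ Es = [] := by
  match Es, Xs, hd.1 with
  | [], [X], _ =>
    have : Y = X := hd.2.1
    exact ⟨by rw [this], rfl⟩
  | E :: Es₂, X0 :: Xs₂, _ =>
    obtain ⟨-, -, f2, -⟩ := decomp_facts A B hlen hA Y X0 E Xs₂ Es₂ hd
    exfalso
    rcases f2 with h | h
    · have := one_le_countOcc A Y _ h; omega
    · have := one_le_countOcc B Y _ h; omega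

lemma unique_decomp (A B : List Bool) (hlen : B.length = A.length) (hA : A ≠ []) :
    ∀ (n : ℕ) (Y : List Bool), Y.length ≤ n →
      ∀ Xs Es Xs' Es', isDecomp A B Y Xs Es → isDecomp A B Y Xs' Es' →
        Xs = Xs' ∧ Es = Es' := by
  have hA1 : 1 ≤ A.length := List.length_pos_iff.mpr hA
  intro n
  induction n with
  | zero =>
    intro Y hY Xs Es Xs' Es' hd hd'
    have hYnil : Y = [] := List.length_eq_zero_iff.mp (by omega)
    have h0A : countOcc A Y = 0 := by
      rw [countOcc_eq_zero_iff]; intro p hp; have := hp.1; rw [hYnil] at this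
      simp only [List.length_nil] at this; omega
    have h0B : countOcc B Y = 0 := by
      rw [countOcc_eq_zero_iff]; intro p hp; have := hp.1; rw [hYnil] at this
      simp only [List.length_nil] at this; omega
    obtain ⟨e1, e2⟩ := decomp_of_no_occ A B hlen hA Y Xs Es hd h0A h0B
    obtain ⟨e3, e4⟩ := decomp_of_no_occ A B hlen hA Y Xs' Es' hd' h0A h0B
    exact ⟨e1.trans e3.symm, e2.trans e4.symm⟩
  | succ n ih =>
    intro Y hY Xs Es Xs' Es' hd hd'
    by_cases h0 : countOcc A Y = 0 ∧ countOcc B Y = 0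
    · obtain ⟨e1, e2⟩ := decomp_of_no_occ A B hlen hA Y Xs Es hd h0.1 h0.2
      obtain ⟨e3, e4⟩ := decomp_of_no_occ A B hlen hA Y Xs' Es' hd' h0.1 h0.2
      exact ⟨e1.trans e3.symm, e2.trans e4.symm⟩
    · match Es, Xs, hd.1, Es', Xs', hd'.1 with
      | [], [X], _, _, _, _ =>
        exfalso
        have hYX : Y = X := hd.2.1
        have := hd.2.2.2.1 X (by simp)
        rw [← hYX] at this
        exact h0 this
      | E :: Es₂, X0 :: Xs₂, _, [], [X], _ =>
        exfalso
        have hYX : Y = X := hd'.2.1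
        have := hd'.2.2.2.1 X (by simp)
        rw [← hYX] at this
        exact h0 this
      | E :: Es₂, X0 :: Xs₂, _, E' :: Es₂', X0' :: Xs₂', _ =>
        obtain ⟨hE1, f1, f2, f3, f4, g1, g2, f5⟩ :=
          decomp_facts A B hlen hA Y X0 E Xs₂ Es₂ hd
        obtain ⟨hE1', f1', f2', f3', f4', g1', g2', f5'⟩ :=
          decomp_facts A B hlen hA Y X0' E' Xs₂' Es₂' hd'
        have hX0len : X0.length = X0'.length :=
          le_antisymm (f1 X0'.length f2') (f1' X0.length f2)
        have hle1 : X0.length + E.length ≤ X0'.length + E'.length := by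
          by_contra hgt
          push_neg at hgt
          obtain ⟨r, hr, hr1, hr2⟩ := f4 (X0'.length + E'.length) (by omega) (by omega)
          rcases f3' r hr with h | h <;> omega
        have hle2 : X0'.length + E'.length ≤ X0.length + E.length := by
          by_contra hgt
          push_neg at hgt
          obtain ⟨r, hr, hr1, hr2⟩ := f4' (X0.length + E.length) (by omega) (by omega)
          rcases f3 r hr with h | h <;> omega
        have hElen : E.length = E'.length := by omega
        have hX0 : X0 = X0' := by rw [← g1, ← g1', hX0len]
        have hE : E = E' := by rw [← g2, ← g2', hX0len, hElen]
        have f5'' : isDecomp A B (Y.drop (X0.length + E.length)) Xs₂' Es₂' := by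
          rw [show X0.length + E.length = X0'.length + E'.length by omega]
          exact f5'
        obtain ⟨t1, t2⟩ := ih (Y.drop (X0.length + E.length))
          (by rw [List.length_drop]; omega) Xs₂ Es₂ Xs₂' Es₂' f5 f5''
        rw [hX0, hE, t1, t2]
        exact ⟨rfl, rfl⟩

end UD

/-- for distinct words `A ≠ B` of the same length, every word
`Y` admits a unique decomposition `Y = X₀ E₁ X₁ ⋯ E_k X_k` where the `Eᵢ` are
overlaps of `A` and `B` capturing all occurrences of `A` and `B` in `Y`, and
the `Xᵢ` contain no occurrence of `A` or `B`. -/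
theorem unique_decomposition (A B : List Bool) (hAB : A ≠ B)
    (hlen : A.length = B.length) (Y : List Bool) :
    ∃! p : List (List Bool) × List (List Bool), isDecomp A B Y p.1 p.2 := by
  have hA : A ≠ [] := by
    intro h
    have hB : B = [] := List.length_eq_zero_iff.mp (by rw [← hlen, h]; rfl)
    exact hAB (h.trans hB.symm)
  obtain ⟨Xs, Es, hd⟩ := UD.exists_decomp A B hlen.symm hA Y.length Y le_rfl
  refine ⟨(Xs, Es), hd, ?_⟩
  rintro ⟨Xs', Es'⟩ hd'
  obtain ⟨h1, h2⟩ := UD.unique_decomp A B hlen.symm hA Y.length Y le_rfl Xs' Es' Xs Es hd' hd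
  simp only [Prod.mk.injEq]
  exact ⟨h1, h2⟩
end
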